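/- arXiv:math/9404234 — 7 statements merged into one kernel-verified Lean document; each statement's English description precedes it below -/
import Mathlib

section
/- Every bounded sequence in a real or complex Banach space has either a weak-Cauchy subsequence or a subsequence equivalent to the standard unit vector basis of ℓ¹. -/
open Filter Topology

section Defs
variable (𝕜 : Type*) [RCLike 𝕜] {B : Type*} [NormedAddCommGroup B] [NormedSpace 𝕜 B]

/-- A sequence is weak-Cauchy if every continuous linear functional converges along it. -/
def WeakCauchy (x : ℕ → B) : Prop :=
  ∀ f : B →L[𝕜] 𝕜, ∃ l : 𝕜, Tendsto (fun n => f (x n)) atTop (𝓝 l)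

/-- A sequence converges weakly. -/
def WeaklyConvergent (x : ℕ → B) : Prop :=
  ∃ b : B, ∀ f : B →L[𝕜] 𝕜, Tendsto (fun n => f (x n)) atTop (𝓝 (f b))

/-- A basic sequence: nonzero terms with uniformly bounded basis projections. -/
def IsBasicSeq (x : ℕ → B) : Prop :=
  (∀ j, x j ≠ 0) ∧ ∃ Λ : ℝ, ∀ (c : ℕ → 𝕜) (k n : ℕ), k ≤ n →
    ‖∑ i ∈ Finset.range k, c i • x i‖ ≤ Λ * ‖∑ i ∈ Finset.range n, c i • x i‖

/-- Strongly summing (s.s.) sequence. -/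
def StronglySumming (b : ℕ → B) : Prop :=
  WeakCauchy 𝕜 b ∧ IsBasicSeq 𝕜 b ∧
    ∀ c : ℕ → 𝕜, (∃ M : ℝ, ∀ n, ‖∑ j ∈ Finset.range n, c j • b j‖ ≤ M) →
      ∃ l : 𝕜, Tendsto (fun n => ∑ j ∈ Finset.range n, c j) atTop (𝓝 l)

/-- Coefficient converging (c.c.) sequence. -/
def CoeffConverging (e : ℕ → B) : Prop :=
  IsBasicSeq 𝕜 e ∧ WeakCauchy 𝕜 (fun n => ∑ j ∈ Finset.range (n + 1), e j) ∧
    ∀ c : ℕ → 𝕜, (∃ M : ℝ, ∀ n, ‖∑ j ∈ Finset.range n, c j • e j‖ ≤ M) →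
      ∃ l : 𝕜, Tendsto c atTop (𝓝 l)

/-- `u` is a convex block basis of `b`. -/
def ConvexBlockBasis (b u : ℕ → B) : Prop :=
  ∃ (n : ℕ → ℕ) (c : ℕ → ℝ), StrictMono n ∧ (∀ i, 0 ≤ c i) ∧
    (∀ j, ∑ i ∈ Finset.Ioc (n j) (n (j + 1)), c i = 1) ∧
    ∀ j, u j = ∑ i ∈ Finset.Ioc (n j) (n (j + 1)), (c i : 𝕜) • b i

/-- `u` is equivalent to the summing basis of the space `Se` of convergent series,
whose norm of a finitely supported sequence `a` is `max_{k ≤ n} ‖∑_{i<k} a i‖`. -/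
def EquivSummingBasis (u : ℕ → B) : Prop :=
  ∃ A C : ℝ, 0 < A ∧ ∀ (n : ℕ) (a : ℕ → 𝕜),
    (∀ k ≤ n, A * ‖∑ i ∈ Finset.range k, a i‖ ≤ ‖∑ i ∈ Finset.range n, a i • u i‖) ∧
    ∃ k ≤ n, ‖∑ i ∈ Finset.range n, a i • u i‖ ≤ C * ‖∑ i ∈ Finset.range k, a i‖

/-- `x` is equivalent to the standard unit vector basis of `ℓ¹`. -/
def EquivL1Basis (x : ℕ → B) : Prop :=
  ∃ c C : ℝ, 0 < c ∧ ∀ (n : ℕ) (a : ℕ → 𝕜),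
    c * ∑ i ∈ Finset.range n, ‖a i‖ ≤ ‖∑ i ∈ Finset.range n, a i • x i‖ ∧
    ‖∑ i ∈ Finset.range n, a i • x i‖ ≤ C * ∑ i ∈ Finset.range n, ‖a i‖

end Defs

section Defs2
variable (𝕜 : Type*) [RCLike 𝕜] (B : Type*) [NormedAddCommGroup B] [NormedSpace 𝕜 B]

/-- Every weak-Cauchy sequence converges weakly. -/
def WeaklySeqComplete : Prop :=
  ∀ x : ℕ → B, WeakCauchy 𝕜 x → WeaklyConvergent 𝕜 x

/-- `c₀` (realized as `C₀(ℕ, 𝕜)`) embeds isomorphically into `B`. -/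
def ContainsC0 : Prop :=
  ∃ T : ZeroAtInftyContinuousMap ℕ 𝕜 →L[𝕜] B, ∃ c : ℝ, 0 < c ∧
    ∀ x, c * ‖x‖ ≤ ‖T x‖

end Defs2

/-!
Rosenthal's argument. Fix countably many pairs of closed balls `(B(zᵢ, ρᵢ), B(wᵢ, ρᵢ))` in `𝕜`
with `8ρᵢ < |zᵢ - wᵢ|` such that any two distinct points lie in the two balls of some pair, and let
`Aᵢ n`, `Bᵢ n` be the sets of functionals `f` of norm `≤ 1` with `f (x n)` in the first, resp.
second, ball. Applying the Nash-Williams theorem to the finite sets `F` on which the alternating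
intersection of the `Aᵢ`, `Bᵢ` is empty, one passes to a subsequence along which the pairs
`(Aᵢ n, Bᵢ n)` are either Boolean independent or convergent (no `f` lies in infinitely many `Aᵢ n`
and infinitely many `Bᵢ n`); a diagonal subsequence handles all `i` at once. Independence for one
`i` gives an `ℓ¹` lower estimate: for functionals `f`, `g` realising the patterns `E` and `∅`,
`(f - g) (∑ aⱼ xⱼ)` is close to `(∑_{j ∈ E} aⱼ) (wᵢ - zᵢ)`, and `E` can be chosen to carry a quarter
of `∑ ‖aⱼ‖`. Convergence for all `i` means that no `f (x n)` has two distinct cluster points, so the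
bounded scalar sequences `f (x n)` converge.
-/

namespace Rosenthal

section Fusion

def above (s : Finset ℕ) (M : Set ℕ) : Set ℕ := {a ∈ M | ∀ b ∈ s, b < a}

lemma above_subset (s : Finset ℕ) (M : Set ℕ) : above s M ⊆ M := fun _ ha => ha.1

lemma above_mono {s : Finset ℕ} {M N : Set ℕ} (h : M ⊆ N) : above s M ⊆ above s N :=
  fun _ ha => ⟨h ha.1, ha.2⟩

lemma above_above (s : Finset ℕ) (M : Set ℕ) : above s (above s M) = above s M := by
  ext a; simp only [above, Set.mem_ofPred_eq, and_self_right]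

lemma infinite_above {M : Set ℕ} (hM : M.Infinite) (s : Finset ℕ) :
    (above s M).Infinite :=
  (hM.sdiff (Set.finite_Iic (s.sup id))).mono fun _ ha =>
    ⟨ha.1, fun _ hb => (Finset.le_sup (f := id) hb).trans_lt (not_le.mp ha.2)⟩

variable (Q : Finset ℕ → Set ℕ → Prop)

lemma exists_forall_mem_finset (hmono : ∀ s {Y Z}, Y ⊆ Z → Q s Z → Q s Y)
    (hext : ∀ s X, X.Infinite → ∃ Y ⊆ X, Y.Infinite ∧ Q s Y) (S : Finset (Finset ℕ))
    {X : Set ℕ} (hX : X.Infinite) : ∃ Y ⊆ X, Y.Infinite ∧ ∀ s ∈ S, Q s Y := by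
  classical
  induction S using Finset.induction_on generalizing X with
  | empty => exact ⟨X, subset_rfl, hX, by simp⟩
  | insert s S _ ih =>
    obtain ⟨Y, hYX, hY, hYS⟩ := ih hX
    obtain ⟨Z, hZY, hZ, hZs⟩ := hext s Y hY
    refine ⟨Z, hZY.trans hYX, hZ, fun t ht => ?_⟩
    rcases Finset.mem_insert.mp ht with rfl | ht
    exacts [hZs, hmono t hZY (hYS t ht)]

lemma exists_infinite_forall_finset_above (hmono : ∀ s {Y Z}, Y ⊆ Z → Q s Z → Q s Y)
    (hext : ∀ s X, X.Infinite → ∃ Y ⊆ X, Y.Infinite ∧ Q s Y) :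
    ∃ M : Set ℕ, M.Infinite ∧ ∀ s : Finset ℕ, ↑s ⊆ M → Q s (above s M) := by
  -- Fusion: `M = {a 0 < a 1 < ⋯}` with `a k = min (Y k)` for a decreasing sequence of infinite
  -- sets `Y k`, where `Y (k + 1)` already satisfies `Q s` for every `s ⊆ {0, …, a k}`.
  have step : ∀ Y : Set ℕ, Y.Infinite → ∃ Y' ⊆ above {sInf Y} Y, Y'.Infinite ∧
      ∀ s ∈ (Finset.range (sInf Y + 1)).powerset, Q s Y' := fun Y hY =>
    exists_forall_mem_finset Q hmono hext _ (infinite_above hY _)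
  choose! next hnext_sub hnext_inf hnext_Q using step
  obtain ⟨Y₀, -, hY₀, hY₀Q⟩ := hext ∅ Set.univ Set.infinite_univ
  set Y : ℕ → Set ℕ := fun k => next^[k] Y₀
  have hY_succ : ∀ k, Y (k + 1) = next (Y k) := fun k => Function.iterate_succ_apply' _ _ _
  have hY_inf : ∀ k, (Y k).Infinite := fun k => by
    induction k with
    | zero => exact hY₀
    | succ k ih => exact hY_succ k ▸ hnext_inf _ ih
  have hY_anti : Antitone Y := antitone_nat_of_succ_le fun k =>
    hY_succ k ▸ (hnext_sub _ (hY_inf k)).trans (above_subset _ _)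
  set a : ℕ → ℕ := fun k => sInf (Y k)
  have ha_mem : ∀ k, a k ∈ Y k := fun k => Nat.sInf_mem (hY_inf k).nonempty
  have ha_lt : ∀ k, ∀ y ∈ Y (k + 1), a k < y := fun k y hy =>
    (hnext_sub _ (hY_inf k) (hY_succ k ▸ hy)).2 _ (Finset.mem_singleton_self _)
  have ha_mono : StrictMono a := strictMono_nat_of_lt_succ fun k => ha_lt k _ (ha_mem _)
  refine ⟨Set.range a, Set.infinite_range_of_injective ha_mono.injective, fun s hs => ?_⟩
  rcases s.eq_empty_or_nonempty with rfl | hne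
  · exact hmono ∅ (fun y hy => by obtain ⟨k, rfl⟩ := hy.1; exact hY_anti k.zero_le (ha_mem k))
      hY₀Q
  obtain ⟨k, hk⟩ := hs (s.max'_mem hne)
  refine hmono s ?_ (hY_succ k ▸ hnext_Q _ (hY_inf k) s ?_)
  · rintro _ ⟨⟨n, rfl⟩, hn⟩
    have hkn : k < n := ha_mono.lt_iff_lt.mp (hk ▸ hn _ (s.max'_mem hne))
    exact hY_succ k ▸ hY_anti hkn (ha_mem n)
  · exact Finset.mem_powerset.mpr fun b hb =>
      Finset.mem_range.mpr (Nat.lt_succ_of_le ((s.le_max' b hb).trans_eq hk.symm))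

end Fusion

section NashWilliams

variable (Fam : Finset ℕ → Prop)

def IsInitialSegment (F : Finset ℕ) (X : Set ℕ) : Prop :=
  ↑F ⊆ X ∧ ∀ a ∈ X, a ∉ F → ∀ b ∈ F, b < a

def HasInitialSegment (X : Set ℕ) : Prop := ∃ F, Fam F ∧ IsInitialSegment F X

-- The accept/reject terminology of the Galvin–Prikry proof of the Nash-Williams theorem.
def Accepts (s : Finset ℕ) (M : Set ℕ) : Prop :=
  ∀ X ⊆ above s M, X.Infinite → HasInitialSegment Fam (↑s ∪ X)

def Rejects (s : Finset ℕ) (M : Set ℕ) : Prop :=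
  ∀ X ⊆ above s M, X.Infinite → ¬ Accepts Fam s X

variable {Fam}

lemma Accepts.mono {s : Finset ℕ} {M N : Set ℕ} (h : Accepts Fam s N) (hMN : M ⊆ N) :
    Accepts Fam s M :=
  fun X hX => h X (hX.trans (above_mono hMN))

lemma Rejects.mono {s : Finset ℕ} {M N : Set ℕ} (h : Rejects Fam s N) (hMN : M ⊆ N) :
    Rejects Fam s M :=
  fun X hX => h X (hX.trans (above_mono hMN))

lemma accepts_of_mem {F : Finset ℕ} (hF : Fam F) (M : Set ℕ) : Accepts Fam F M :=
  fun _ hX _ => ⟨F, hF, Set.subset_union_left, fun _ ha haF b hb =>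
    (ha.resolve_left haF |> hX).2 b hb⟩

lemma exists_accepts_or_rejects (s : Finset ℕ) (M : Set ℕ) (hM : M.Infinite) :
    ∃ Y ⊆ M, Y.Infinite ∧ (Accepts Fam s Y ∨ Rejects Fam s Y) := by
  by_cases h : Rejects Fam s M
  · exact ⟨M, subset_rfl, hM, Or.inr h⟩
  · simp only [Rejects, not_forall, not_not] at h
    obtain ⟨X, hX, hXinf, hacc⟩ := h
    exact ⟨X, hX.trans (above_subset _ _), hXinf, Or.inl hacc⟩

lemma exists_infinite_accepts_or_rejects_forall :
    ∃ M : Set ℕ, M.Infinite ∧ ∀ s : Finset ℕ, ↑s ⊆ M → Accepts Fam s M ∨ Rejects Fam s M := by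
  obtain ⟨M, hM, hdec⟩ := exists_infinite_forall_finset_above
    (fun s Y => Accepts Fam s Y ∨ Rejects Fam s Y)
    (fun s _ _ hYZ h => h.imp (·.mono hYZ) (·.mono hYZ))
    (fun s X hX => exists_accepts_or_rejects s X hX)
  refine ⟨M, hM, fun s hs => ?_⟩
  have := hdec s hs
  simp only [Accepts, Rejects, above_above] at this ⊢
  exact this

-- Otherwise the infinitely many such `a` would form a set accepting `s`.
lemma finite_setOf_not_rejects_insert {s : Finset ℕ} {M : Set ℕ} (hM : Rejects Fam s M)
    (hdec : ∀ a ∈ above s M, Accepts Fam (insert a s) M ∨ Rejects Fam (insert a s) M) :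
    {a ∈ above s M | ¬ Rejects Fam (insert a s) M}.Finite := by
  by_contra hinf
  refine hM _ (fun a ha => ha.1) hinf fun Y hY hYinf => ?_
  set a := sInf Y
  have haY : a ∈ Y := Nat.sInf_mem hYinf.nonempty
  have hacc : Accepts Fam (insert a s) M := ((hY haY).1.1 |> hdec a).resolve_right (hY haY).1.2
  have hYa : Y \ {a} ⊆ above (insert a s) M := by
    intro y ⟨hyY, hya⟩
    refine ⟨(hY hyY).1.1.1, fun b hb => ?_⟩
    rcases Finset.mem_insert.mp hb with rfl | hb
    · exact lt_of_le_of_ne (Nat.sInf_le hyY) (Ne.symm hya)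
    · exact (hY hyY).2 b hb
  have := hacc _ hYa (hYinf.sdiff (Set.finite_singleton a))
  rwa [Finset.coe_insert, Set.insert_union, ← Set.union_insert, Set.insert_sdiff_singleton,
    Set.insert_eq_of_mem haY] at this

lemma eventually_rejects_insert {t : Finset ℕ} {M : Set ℕ} (ht : ↑t ⊆ M)
    (hrej : Rejects Fam t M) (hdec : ∀ s : Finset ℕ, ↑s ⊆ M → Accepts Fam s M ∨ Rejects Fam s M) :
    ∀ᶠ y in atTop, y ∈ M → Rejects Fam (insert y t) M := by
  have hfin := finite_setOf_not_rejects_insert hrej fun y hy =>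
    hdec _ (by simpa [Set.insert_subset_iff] using ⟨hy.1, ht⟩)
  rw [← Nat.cofinite_eq_atTop]
  filter_upwards [hfin.eventually_cofinite_notMem,
    Nat.cofinite_eq_atTop ▸ eventually_gt_atTop (t.sup id)] with y hy hyt hyM
  exact by_contra fun h => hy ⟨⟨hyM, fun b hb => (Finset.le_sup (f := id) hb).trans_lt hyt⟩, h⟩

lemma exists_mem_rejects_insert {M : Set ℕ} (hM : M.Infinite) (h₀ : Rejects Fam ∅ M)
    (hdec : ∀ s : Finset ℕ, ↑s ⊆ M → Accepts Fam s M ∨ Rejects Fam s M) (u : Finset ℕ) :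
    ∃ y ∈ M, Rejects Fam {y} M ∧ ∀ x ∈ u, x < y ∧ ∀ t ∈ (Finset.range (x + 1)).powerset,
      ↑t ⊆ M → Rejects Fam t M → Rejects Fam (insert y t) M := by
  have h₁ : ∀ᶠ y in atTop, y ∈ M → Rejects Fam {y} M := by
    simpa using eventually_rejects_insert (by simp) h₀ hdec
  have h₂ : ∀ᶠ y in atTop, ∀ x ∈ u, x < y ∧ ∀ t ∈ (Finset.range (x + 1)).powerset,
      ↑t ⊆ M → Rejects Fam t M → y ∈ M → Rejects Fam (insert y t) M :=
    (eventually_all_finset u).mpr fun x _ => (eventually_gt_atTop x).and <|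
      (eventually_all_finset _).mpr fun t _ => eventually_imp_distrib_left.mpr fun ht =>
        eventually_imp_distrib_left.mpr fun hrej => eventually_rejects_insert ht hrej hdec
  obtain ⟨y, hyM, hy₁, hy₂⟩ :=
    ((Nat.frequently_atTop_iff_infinite.mpr hM).and_eventually (h₁.and h₂)).exists
  exact ⟨y, hyM, hy₁ hyM, fun x hx =>
    ⟨(hy₂ x hx).1, fun t ht htM hrej => (hy₂ x hx).2 t ht htM hrej hyM⟩⟩

lemma exists_infinite_rejects_forall {M : Set ℕ} (hM : M.Infinite) (h₀ : Rejects Fam ∅ M)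
    (hdec : ∀ s : Finset ℕ, ↑s ⊆ M → Accepts Fam s M ∨ Rejects Fam s M) :
    ∃ N ⊆ M, N.Infinite ∧ ∀ s : Finset ℕ, ↑s ⊆ N → Rejects Fam s M := by
  classical
  obtain ⟨f, hfM, hf⟩ := exists_seq_of_forall_finset_exists (fun y => y ∈ M ∧ Rejects Fam {y} M)
    (fun x y => x < y ∧ ∀ t ∈ (Finset.range (x + 1)).powerset,
      ↑t ⊆ M → Rejects Fam t M → Rejects Fam (insert y t) M)
    fun u _ => by
      obtain ⟨y, hyM, hy⟩ := exists_mem_rejects_insert hM h₀ hdec u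
      exact ⟨y, ⟨hyM, hy.1⟩, hy.2⟩
  have hf_mono : StrictMono f := fun m n hmn => (hf m n hmn).1
  have hfM' : Set.range f ⊆ M := Set.range_subset_iff.mpr fun n => (hfM n).1
  refine ⟨Set.range f, hfM', Set.infinite_range_of_injective hf_mono.injective, fun s => ?_⟩
  induction s using Finset.induction_on_max with
  | empty => exact fun _ => h₀
  | insert a t hlt ih =>
    intro hs
    have ht : ↑t ⊆ Set.range f := fun b hb => hs (Finset.mem_insert_of_mem hb)
    obtain ⟨k, rfl⟩ := hs (Finset.mem_insert_self _ t)
    rcases t.eq_empty_or_nonempty with rfl | hne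
    · simpa using (hfM k).2
    obtain ⟨m, hm⟩ := ht (t.max'_mem hne)
    have hmk : m < k := hf_mono.lt_iff_lt.mp (hm ▸ hlt _ (t.max'_mem hne))
    exact (hf m k hmk).2 t (Finset.mem_powerset.mpr fun b hb => Finset.mem_range.mpr
      (Nat.lt_succ_of_le ((t.le_max' b hb).trans_eq hm.symm))) (ht.trans hfM') (ih ht)

theorem nash_williams (Fam : Finset ℕ → Prop) : ∃ M : Set ℕ, M.Infinite ∧
    ((∀ X ⊆ M, X.Infinite → HasInitialSegment Fam X) ∨
      ∀ X ⊆ M, X.Infinite → ¬ HasInitialSegment Fam X) := by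
  obtain ⟨M, hM, hdec⟩ := exists_infinite_accepts_or_rejects_forall (Fam := Fam)
  rcases hdec ∅ (by simp) with hacc | hrej
  · refine ⟨M, hM, Or.inl fun X hX hXinf => ?_⟩
    simpa using hacc X (fun x hx => ⟨hX hx, by simp⟩) hXinf
  · obtain ⟨N, hNM, hN, hrejN⟩ := exists_infinite_rejects_forall hM hrej hdec
    refine ⟨N, hN, Or.inr fun X hXN hXinf ⟨F, hF, hFX⟩ => ?_⟩
    exact hrejN F (hFX.1.trans hXN) (above F X) (above_mono (hXN.trans hNM))
      (infinite_above hXinf F) (accepts_of_mem hF _)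

end NashWilliams

section Pairs

variable {S : Type*}

def altInter (A B : ℕ → Set S) (F : Finset ℕ) : Set S :=
  ⋂ x ∈ F, if Even (F.filter (· < x)).card then A x else B x

def IndependentPairs (A B : ℕ → Set S) : Prop :=
  ∀ (n : ℕ) (E : Finset ℕ), ∃ t, ∀ j < n, (j ∈ E → t ∈ B j) ∧ (j ∉ E → t ∈ A j)

def ConvergentPairs (A B : ℕ → Set S) : Prop :=
  ∀ t, ¬ ((∃ᶠ n in atTop, t ∈ A n) ∧ ∃ᶠ n in atTop, t ∈ B n)

lemma card_filter_lt_image {m : ℕ → ℕ} (hm : StrictMono m) (G : Finset ℕ) (k : ℕ) :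
    ((G.image m).filter (· < m k)).card = (G.filter (· < k)).card := by
  simp [Finset.filter_image, Finset.card_image_of_injective _ hm.injective, hm.lt_iff_lt]

lemma exists_finset_even_card_filter_iff (p : ℕ → Prop) (n : ℕ) :
    ∃ G : Finset ℕ, G ⊆ Finset.range (2 * n) ∧
      ∀ j < n, 2 * j + 1 ∈ G ∧ (Even (G.filter (· < 2 * j + 1)).card ↔ p j) := by
  classical
  induction n with
  | zero => exact ⟨∅, by simp, by simp⟩
  | succ n ih =>
    obtain ⟨G, hG, hGp⟩ := ih
    have hG' : ∀ y ∈ G, y < 2 * n := fun y hy => Finset.mem_range.mp (hG hy)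
    -- `2 * n` is added exactly when the position of `2 * n + 1` would have the wrong parity
    set X : Finset ℕ := if (Even G.card ↔ p n) then ∅ else {2 * n}
    have hX : ∀ y ∈ X, y = 2 * n := fun y hy => by
      by_cases h : Even G.card ↔ p n <;> simp_all [X]
    have hGX : ∀ y ∈ G ∪ X, y ≤ 2 * n := fun y hy => by
      rcases Finset.mem_union.mp hy with hy | hy
      · exact (hG' y hy).le
      · exact (hX y hy).le
    have hfilter : ∀ j ≤ n, (insert (2 * n + 1) (G ∪ X)).filter (· < 2 * j + 1) =
        (G ∪ X).filter (· < 2 * j + 1) := fun j hj => by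
      rw [Finset.filter_insert, if_neg (by omega)]
    refine ⟨insert (2 * n + 1) (G ∪ X), fun y hy => Finset.mem_range.mpr ?_, fun j hj => ?_⟩
    · rcases Finset.mem_insert.mp hy with rfl | hy
      · omega
      · have := hGX y hy; omega
    rcases Nat.lt_succ_iff_lt_or_eq.mp hj with hj | rfl
    · rw [hfilter j hj.le, Finset.filter_union,
        Finset.filter_false_of_mem (s := X) fun y hy => by have := hX y hy; omega,
        Finset.union_empty]
      exact ⟨Finset.mem_insert_of_mem (Finset.mem_union_left _ (hGp j hj).1), (hGp j hj).2⟩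
    · have hdisj : Disjoint G X := Finset.disjoint_left.mpr fun y hyG hyX =>
        (hG' y hyG).ne (hX y hyX)
      rw [hfilter _ le_rfl, Finset.filter_true_of_mem fun y hy => by have := hGX y hy; omega,
        Finset.card_union_of_disjoint hdisj]
      refine ⟨Finset.mem_insert_self _ _, ?_⟩
      by_cases h : Even G.card ↔ p j
      · simp [X, h]
      · simp only [X, h, if_false]
        rw [Finset.card_singleton, Nat.even_add_one]
        tauto

lemma card_filter_lt_of_isInitialSegment {g : ℕ → ℕ} (hg : StrictMono g) {F : Finset ℕ}
    (hF : IsInitialSegment F (Set.range g)) {j : ℕ} (hj : g j ∈ F) :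
    (F.filter (· < g j)).card = j := by
  have : F.filter (· < g j) = (Finset.range j).image g := by
    ext y
    simp only [Finset.mem_filter, Finset.mem_image, Finset.mem_range]
    constructor
    · rintro ⟨hy, hlt⟩
      obtain ⟨i, rfl⟩ := hF.1 hy
      exact ⟨i, hg.lt_iff_lt.mp hlt, rfl⟩
    · rintro ⟨i, hi, rfl⟩
      refine ⟨by_contra fun hiF => (hg hi).not_gt (hF.2 _ ⟨i, rfl⟩ hiF _ hj), hg hi⟩
  rw [this, Finset.card_image_of_injective _ hg.injective, Finset.card_range]

variable {A B : ℕ → Set S}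

lemma convergentPairs_of_forall_hasInitialSegment {m : ℕ → ℕ} (hm : StrictMono m)
    (h : ∀ X ⊆ Set.range m, X.Infinite → HasInitialSegment (altInter A B · = ∅) X) :
    ConvergentPairs (A ∘ m) (B ∘ m) := by
  rintro t ⟨hA, hB⟩
  obtain ⟨e, he, hte⟩ := extraction_forall_of_frequently (P := fun j k =>
    t ∈ if Even j then A (m k) else B (m k)) fun j => by
      by_cases hj : Even j
      · simpa [hj] using hA
      · simpa [hj] using hB
  have hg : StrictMono (m ∘ e) := hm.comp he
  obtain ⟨F, hF, hFX⟩ := h _ (Set.range_comp_subset_range e m)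
    (Set.infinite_range_of_injective hg.injective)
  refine (Set.eq_empty_iff_forall_notMem.mp hF) t (Set.mem_iInter₂.mpr fun x hx => ?_)
  obtain ⟨j, rfl⟩ := hFX.1 hx
  rw [card_filter_lt_of_isInitialSegment hg hFX hx]
  exact hte j

lemma ConvergentPairs.comp_of_forall_exists_ge {θ d : ℕ → ℕ}
    (h : ConvergentPairs (A ∘ θ) (B ∘ θ)) {i : ℕ} (hd : ∀ n, i ≤ n → ∃ k, n ≤ k ∧ d n = θ k) :
    ConvergentPairs (A ∘ d) (B ∘ d) := by
  have key : ∀ {C : ℕ → Set S} {t : S}, (∃ᶠ n in atTop, t ∈ C (d n)) →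
      ∃ᶠ k in atTop, t ∈ C (θ k) := by
    intro C t hC
    rw [frequently_atTop] at hC ⊢
    intro N
    obtain ⟨n, hn, htn⟩ := hC (max N i)
    obtain ⟨k, hnk, hk⟩ := hd n (le_of_max_le_right hn)
    exact ⟨k, (le_of_max_le_left hn).trans hnk, hk ▸ htn⟩
  exact fun t ⟨hA, hB⟩ => h t ⟨key hA, key hB⟩

lemma independentPairs_of_forall_altInter_nonempty {m : ℕ → ℕ} (hm : StrictMono m)
    (h : ∀ F : Finset ℕ, ↑F ⊆ Set.range m → (altInter A B F).Nonempty) :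
    IndependentPairs (A ∘ fun j => m (2 * j + 1)) (B ∘ fun j => m (2 * j + 1)) := by
  intro n E
  obtain ⟨G, -, hG⟩ := exists_finset_even_card_filter_iff (· ∉ E) n
  obtain ⟨t, ht⟩ := h (G.image m) (by simp)
  refine ⟨t, fun j hj => ?_⟩
  have htj := Set.mem_iInter₂.mp ht (m (2 * j + 1)) (Finset.mem_image_of_mem m (hG j hj).1)
  rw [card_filter_lt_image hm] at htj
  constructor
  · intro hjE
    rwa [if_neg (mt (hG j hj).2.mp (not_not.mpr hjE))] at htj
  · intro hjE
    rwa [if_pos ((hG j hj).2.mpr hjE)] at htj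

theorem exists_strictMono_independentPairs_or_convergentPairs (A B : ℕ → Set S) :
    ∃ φ : ℕ → ℕ, StrictMono φ ∧
      (IndependentPairs (A ∘ φ) (B ∘ φ) ∨ ConvergentPairs (A ∘ φ) (B ∘ φ)) := by
  obtain ⟨M, hM, hdich⟩ := nash_williams (altInter A B · = ∅)
  have hm : StrictMono (Nat.nth (· ∈ M)) := Nat.nth_strictMono hM
  have hrange : Set.range (Nat.nth (· ∈ M)) = M := Nat.range_nth_of_infinite hM
  rcases hdich with hall | hnone
  · exact ⟨_, hm, Or.inr (convergentPairs_of_forall_hasInitialSegment hm (hrange.symm ▸ hall))⟩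
  refine ⟨_, hm.comp fun i j hij => by omega, Or.inl
    (independentPairs_of_forall_altInter_nonempty hm fun F hF => ?_)⟩
  rw [hrange] at hF
  refine Set.nonempty_iff_ne_empty.mpr fun hF_empty => hnone (↑F ∪ above F M)
    (Set.union_subset hF (above_subset _ _)) ((infinite_above hM F).mono Set.subset_union_right)
    ⟨F, hF_empty, Set.subset_union_left, fun a ha haF b hb => (ha.resolve_left haF).2 b hb⟩

end Pairs

section EquivL1Basis

lemma exists_subset_sum_abs_le_two_mul {ι : Type*} (T : Finset ι) (f : ι → ℝ) :
    ∃ E ⊆ T, ∑ i ∈ T, |f i| ≤ 2 * |∑ i ∈ E, f i| := by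
  classical
  set P := T.filter (0 ≤ f ·)
  set N := T.filter (¬ 0 ≤ f ·)
  have hP : ∑ i ∈ P, |f i| ≤ |∑ i ∈ P, f i| := by
    rw [Finset.sum_congr rfl fun i hi => abs_of_nonneg (Finset.mem_filter.mp hi).2]
    exact le_abs_self _
  have hN : ∑ i ∈ N, |f i| ≤ |∑ i ∈ N, f i| := by
    rw [Finset.sum_congr rfl fun i hi => abs_of_neg (not_le.mp (Finset.mem_filter.mp hi).2),
      Finset.sum_neg_distrib]
    exact neg_le_abs _
  have hsplit := Finset.sum_filter_add_sum_filter_not T (0 ≤ f ·) (fun i => |f i|)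
  rcases le_total |∑ i ∈ P, f i| |∑ i ∈ N, f i| with h | h
  · exact ⟨N, Finset.filter_subset _ _, by linarith⟩
  · exact ⟨P, Finset.filter_subset _ _, by linarith⟩

variable {𝕜 : Type*} [RCLike 𝕜]

lemma norm_le_abs_re_add_abs_im (z : 𝕜) : ‖z‖ ≤ |RCLike.re z| + |RCLike.im z| := by
  have h := RCLike.norm_sq_eq_def (z := z)
  nlinarith [abs_nonneg (RCLike.re z), abs_nonneg (RCLike.im z), sq_abs (RCLike.re z),
    sq_abs (RCLike.im z), norm_nonneg z]

lemma exists_subset_sum_norm_le_four_mul {ι : Type*} (T : Finset ι) (a : ι → 𝕜) :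
    ∃ E ⊆ T, ∑ i ∈ T, ‖a i‖ ≤ 4 * ‖∑ i ∈ E, a i‖ := by
  obtain ⟨E₁, hE₁, h₁⟩ := exists_subset_sum_abs_le_two_mul T (RCLike.re ∘ a)
  obtain ⟨E₂, hE₂, h₂⟩ := exists_subset_sum_abs_le_two_mul T (RCLike.im ∘ a)
  have hre : |∑ i ∈ E₁, RCLike.re (a i)| ≤ ‖∑ i ∈ E₁, a i‖ := by
    rw [← map_sum]; exact RCLike.abs_re_le_norm _
  have him : |∑ i ∈ E₂, RCLike.im (a i)| ≤ ‖∑ i ∈ E₂, a i‖ := by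
    rw [← map_sum]; exact RCLike.abs_im_le_norm _
  have hsum : ∑ i ∈ T, ‖a i‖ ≤ ∑ i ∈ T, |RCLike.re (a i)| + ∑ i ∈ T, |RCLike.im (a i)| := by
    rw [← Finset.sum_add_distrib]
    exact Finset.sum_le_sum fun i _ => norm_le_abs_re_add_abs_im (a i)
  simp only [Function.comp_apply] at h₁ h₂
  rcases le_total ‖∑ i ∈ E₁, a i‖ ‖∑ i ∈ E₂, a i‖ with h | h
  · exact ⟨E₂, hE₂, by linarith⟩
  · exact ⟨E₁, hE₁, by linarith⟩

variable {B : Type*} [NormedAddCommGroup B] [NormedSpace 𝕜 B]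

lemma norm_sum_smul_le {x : ℕ → B} {M : ℝ} (hx : ∀ n, ‖x n‖ ≤ M) (T : Finset ℕ) (a : ℕ → 𝕜) :
    ‖∑ i ∈ T, a i • x i‖ ≤ M * ∑ i ∈ T, ‖a i‖ := by
  rw [Finset.mul_sum]
  refine (norm_sum_le _ _).trans (Finset.sum_le_sum fun i _ => ?_)
  rw [norm_smul, mul_comm]
  exact mul_le_mul_of_nonneg_right (hx i) (norm_nonneg _)

lemma norm_sum_mul_sub_le_two_mul_norm_sum_smul {x : ℕ → B} {n : ℕ} {E : Finset ℕ}
    (hE : E ⊆ Finset.range n) {z w : 𝕜} {ρ : ℝ} {f g : B →L[𝕜] 𝕜} (hf : ‖f‖ ≤ 1) (hg : ‖g‖ ≤ 1)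
    (hfx : ∀ j < n, dist (f (x j)) (if j ∈ E then w else z) ≤ ρ)
    (hgx : ∀ j < n, dist (g (x j)) z ≤ ρ) (a : ℕ → 𝕜) :
    ‖∑ i ∈ E, a i‖ * ‖w - z‖ - 2 * ρ * ∑ i ∈ Finset.range n, ‖a i‖ ≤
      2 * ‖∑ i ∈ Finset.range n, a i • x i‖ := by
  classical
  set v := ∑ i ∈ Finset.range n, a i • x i
  set e : ℕ → 𝕜 := fun i => (f (x i) - if i ∈ E then w else z) - (g (x i) - z)
  have hsplit : f v - g v = (∑ i ∈ E, a i) * (w - z) + ∑ i ∈ Finset.range n, a i * e i := by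
    have hE' : ∑ i ∈ Finset.range n, a i * (if i ∈ E then w - z else 0) =
        (∑ i ∈ E, a i) * (w - z) := by
      simp_rw [mul_ite, mul_zero]
      rw [Finset.sum_ite_mem, Finset.inter_eq_right.mpr hE, Finset.sum_mul]
    rw [← hE', ← Finset.sum_add_distrib]
    simp only [v, map_sum, map_smul, smul_eq_mul, ← Finset.sum_sub_distrib]
    refine Finset.sum_congr rfl fun i _ => ?_
    simp only [e]
    split_ifs <;> ring
  have he : ‖∑ i ∈ Finset.range n, a i * e i‖ ≤ 2 * ρ * ∑ i ∈ Finset.range n, ‖a i‖ := by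
    rw [Finset.mul_sum]
    refine (norm_sum_le _ _).trans (Finset.sum_le_sum fun i hi => ?_)
    have hi := Finset.mem_range.mp hi
    rw [norm_mul, mul_comm]
    refine mul_le_mul_of_nonneg_right ((norm_sub_le _ _).trans ?_) (norm_nonneg _)
    rw [← dist_eq_norm, ← dist_eq_norm]
    linarith [hfx i hi, hgx i hi]
  have hfg : ‖f v - g v‖ ≤ 2 * ‖v‖ := by
    have hf' := (f.le_opNorm v).trans (mul_le_of_le_one_left (norm_nonneg _) hf)
    have hg' := (g.le_opNorm v).trans (mul_le_of_le_one_left (norm_nonneg _) hg)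
    linarith [norm_sub_le (f v) (g v)]
  have := norm_sub_le (f v - g v) (∑ i ∈ Finset.range n, a i * e i)
  rw [hsplit, add_sub_cancel_right, norm_mul, ← hsplit] at this
  linarith

def dualBallNear (x : ℕ → B) (c : 𝕜) (r : ℝ) (n : ℕ) : Set (B →L[𝕜] 𝕜) :=
  {f | ‖f‖ ≤ 1 ∧ f (x n) ∈ Metric.closedBall c r}

lemma equivL1Basis_of_independentPairs {x : ℕ → B} {M : ℝ} (hx : ∀ n, ‖x n‖ ≤ M) {z w : 𝕜}
    {ρ : ℝ} (hρ : 8 * ρ < dist z w)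
    (h : IndependentPairs (dualBallNear x z ρ) (dualBallNear x w ρ)) : EquivL1Basis 𝕜 x := by
  refine ⟨(dist z w / 4 - 2 * ρ) / 2, M, by linarith, fun n a => ⟨?_, norm_sum_smul_le hx _ a⟩⟩
  obtain ⟨E, hE, hE4⟩ := exists_subset_sum_norm_le_four_mul (Finset.range n) a
  -- patterns of length `n + 1` also force the witnesses into the dual unit ball when `n = 0`
  obtain ⟨f, hf⟩ := h (n + 1) E
  obtain ⟨g, hg⟩ := h (n + 1) ∅
  have hfx : ∀ j < n, dist (f (x j)) (if j ∈ E then w else z) ≤ ρ := fun j hj => by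
    by_cases hjE : j ∈ E
    · simpa [hjE] using ((hf j (by omega)).1 hjE).2
    · simpa [hjE] using ((hf j (by omega)).2 hjE).2
  have hf₁ : ‖f‖ ≤ 1 := by
    by_cases hnE : n ∈ E
    · exact ((hf n n.lt_succ_self).1 hnE).1
    · exact ((hf n n.lt_succ_self).2 hnE).1
  have key := norm_sum_mul_sub_le_two_mul_norm_sum_smul hE hf₁
    ((hg n n.lt_succ_self).2 (Finset.notMem_empty n)).1 hfx
    (fun j hj => ((hg j (by omega)).2 (Finset.notMem_empty j)).2) a
  rw [← dist_eq_norm, dist_comm] at key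
  have hσ : 0 ≤ ∑ i ∈ Finset.range n, ‖a i‖ := Finset.sum_nonneg fun i _ => norm_nonneg _
  nlinarith [dist_nonneg (x := z) (y := w)]

end EquivL1Basis

lemma exists_nested_subseq_diag (P : ℕ → (ℕ → ℕ) → Prop)
    (h : ∀ i (φ : ℕ → ℕ), ∃ ψ : ℕ → ℕ, StrictMono ψ ∧ P i (φ ∘ ψ)) :
    ∃ θ : ℕ → ℕ → ℕ, (∀ i, StrictMono (θ i) ∧ P i (θ i)) ∧
      ∃ d : ℕ → ℕ, StrictMono d ∧ ∀ i n, i ≤ n → ∃ k, n ≤ k ∧ d n = θ i k := by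
  choose ψ hψ hP using h
  set Θ : ℕ → ℕ → ℕ := fun i => Nat.rec id (fun i φ => φ ∘ ψ i φ) i
  have hΘ_mono : ∀ i, StrictMono (Θ i) := by
    intro i
    induction i with
    | zero => exact strictMono_id
    | succ i ih => exact ih.comp (hψ _ _)
  have hΘ_sub : ∀ i b j, ∃ k, j ≤ k ∧ Θ (i + b) j = Θ i k := by
    intro i b
    induction b with
    | zero => exact fun j => ⟨j, le_rfl, rfl⟩
    | succ b ih =>
      intro j
      obtain ⟨k, hjk, hk⟩ := ih (ψ (i + b) (Θ (i + b)) j)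
      exact ⟨k, (hψ _ _).le_apply.trans hjk, hk⟩
  refine ⟨fun i => Θ (i + 1), fun i => ⟨hΘ_mono (i + 1), hP _ _⟩, fun n => Θ (n + 1) n,
    strictMono_nat_of_lt_succ fun n => ?_, fun i n hin => ?_⟩
  · exact hΘ_mono (n + 1) (n.lt_succ_self.trans_le (hψ _ _).le_apply)
  · obtain ⟨k, hnk, hk⟩ := hΘ_sub (i + 1) (n - i) n
    rw [show i + 1 + (n - i) = n + 1 by omega] at hk
    exact ⟨k, hnk, hk⟩

section WeakCauchy

lemma exists_separating_balls (X : Type*) [MetricSpace X]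
    [TopologicalSpace.SeparableSpace X] [Nontrivial X] :
    ∃ (z w : ℕ → X) (ρ : ℕ → ℝ), (∀ i, 8 * ρ i < dist (z i) (w i)) ∧
      ∀ a b, a ≠ b → ∃ i, dist a (z i) < ρ i ∧ dist b (w i) < ρ i := by
  obtain ⟨D, hDc, hD⟩ := TopologicalSpace.exists_countable_dense X
  set T : Set (X × X × ℚ) := {t | t.1 ∈ D ∧ t.2.1 ∈ D ∧ 8 * (t.2.2 : ℝ) < dist t.1 t.2.1}
  have hT : T.Countable := (hDc.prod (hDc.prod Set.countable_univ)).mono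
    fun t (ht : t ∈ T) => show t ∈ D ×ˢ D ×ˢ Set.univ from ⟨ht.1, ht.2.1, trivial⟩
  have hcover : ∀ a b, a ≠ b → ∃ t ∈ T, dist a t.1 < t.2.2 ∧ dist b t.2.1 < t.2.2 := by
    intro a b hab
    have hδ : 0 < dist a b := dist_pos.mpr hab
    obtain ⟨q, hq₁, hq₂⟩ := exists_rat_btwn (show dist a b / 20 < dist a b / 10 by linarith)
    obtain ⟨z, hzD, hz⟩ := hD.exists_dist_lt a (show 0 < dist a b / 20 by positivity)
    obtain ⟨w, hwD, hw⟩ := hD.exists_dist_lt b (show 0 < dist a b / 20 by positivity)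
    refine ⟨(z, w, q), ⟨hzD, hwD, ?_⟩, by simp only; linarith, by simp only; linarith⟩
    linarith [dist_triangle4 a z w b, dist_comm w b]
  obtain ⟨a, b, hab⟩ := exists_pair_ne X
  obtain ⟨t, htT, -⟩ := hcover a b hab
  obtain ⟨p, hp⟩ := hT.exists_eq_range ⟨t, htT⟩
  refine ⟨fun i => (p i).1, fun i => (p i).2.1, fun i => (p i).2.2,
    fun i => (hp ▸ Set.mem_range_self i : p i ∈ T).2.2, fun a b hab => ?_⟩
  obtain ⟨t, htT, ht⟩ := hcover a b hab
  obtain ⟨i, rfl⟩ := hp ▸ htT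
  exact ⟨i, ht⟩

lemma exists_ne_mapClusterPt {X : Type*} [PseudoMetricSpace X] [ProperSpace X] {u : ℕ → X}
    (hu : Bornology.IsBounded (Set.range u)) (h : ¬ ∃ l, Tendsto u atTop (𝓝 l)) :
    ∃ a b, a ≠ b ∧ MapClusterPt a atTop u ∧ MapClusterPt b atTop u := by
  have hK := hu.isCompact_closure
  have hmem : ∀ᶠ n in atTop, u n ∈ closure (Set.range u) :=
    Eventually.of_forall fun n => subset_closure (Set.mem_range_self n)
  obtain ⟨a, -, ha⟩ := hK.exists_mapClusterPt (f := atTop) (tendsto_principal.mpr hmem)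
  exact by_contra fun hne => h ⟨a, hK.tendsto_nhds_of_unique_mapClusterPt hmem fun b _ hb =>
    by_contra fun hba => hne ⟨b, a, hba, hb, ha⟩⟩

lemma exists_tendsto_of_not_frequently_mem_closedBall {X : Type*} [PseudoMetricSpace X]
    [ProperSpace X] {z w : ℕ → X} {ρ : ℕ → ℝ}
    (hsep : ∀ a b, a ≠ b → ∃ i, dist a (z i) < ρ i ∧ dist b (w i) < ρ i) {u : ℕ → X}
    (hu : Bornology.IsBounded (Set.range u))
    (h : ∀ i, ¬ ((∃ᶠ n in atTop, u n ∈ Metric.closedBall (z i) (ρ i)) ∧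
      ∃ᶠ n in atTop, u n ∈ Metric.closedBall (w i) (ρ i))) :
    ∃ l, Tendsto u atTop (𝓝 l) := by
  by_contra hu'
  obtain ⟨a, b, hab, ha, hb⟩ := exists_ne_mapClusterPt hu hu'
  obtain ⟨i, hai, hbi⟩ := hsep a b hab
  exact h i ⟨mapClusterPt_iff_frequently.mp ha _ (mem_of_superset
      (Metric.isOpen_ball.mem_nhds hai) Metric.ball_subset_closedBall),
    mapClusterPt_iff_frequently.mp hb _ (mem_of_superset
      (Metric.isOpen_ball.mem_nhds hbi) Metric.ball_subset_closedBall)⟩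

variable {𝕜 : Type*} [RCLike 𝕜] {B : Type*} [NormedAddCommGroup B] [NormedSpace 𝕜 B]

lemma weakCauchy_of_forall_norm_le_one {x : ℕ → B}
    (h : ∀ f : B →L[𝕜] 𝕜, ‖f‖ ≤ 1 → ∃ l, Tendsto (fun n => f (x n)) atTop (𝓝 l)) :
    WeakCauchy 𝕜 x := by
  intro f
  set c : 𝕜 := ((‖f‖ + 1 : ℝ) : 𝕜)
  have hc : ‖c‖ = ‖f‖ + 1 := by rw [RCLike.norm_ofReal, abs_of_pos (by positivity)]
  have hc₀ : c ≠ 0 := norm_ne_zero_iff.mp (by rw [hc]; positivity)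
  obtain ⟨l, hl⟩ := h (c⁻¹ • f) (by
    rw [norm_smul, norm_inv, hc, inv_mul_le_iff₀ (by positivity)]
    linarith)
  refine ⟨c * l, (hl.const_mul c).congr fun n => ?_⟩
  simp [hc₀]

lemma weakCauchy_of_convergentPairs {x : ℕ → B} {M : ℝ} (hx : ∀ n, ‖x n‖ ≤ M) {z w : ℕ → 𝕜}
    {ρ : ℕ → ℝ} (hsep : ∀ a b, a ≠ b → ∃ i, dist a (z i) < ρ i ∧ dist b (w i) < ρ i)
    (h : ∀ i, ConvergentPairs (dualBallNear x (z i) (ρ i)) (dualBallNear x (w i) (ρ i))) :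
    WeakCauchy 𝕜 x := by
  refine weakCauchy_of_forall_norm_le_one fun f hf =>
    exists_tendsto_of_not_frequently_mem_closedBall hsep ?_ fun i ⟨hz, hw⟩ =>
      h i f ⟨hz.mono fun n hn => ⟨hf, hn⟩, hw.mono fun n hn => ⟨hf, hn⟩⟩
  refine isBounded_iff_forall_norm_le.mpr ⟨M, Set.forall_mem_range.mpr fun n => ?_⟩
  exact (f.le_opNorm _).trans ((mul_le_of_le_one_left (norm_nonneg _) hf).trans (hx n))

end WeakCauchy

end Rosenthal

theorem rosenthal_l1_theorem_general {𝕜 : Type*} [RCLike 𝕜] {B : Type*} [NormedAddCommGroup B]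
    [NormedSpace 𝕜 B] (x : ℕ → B) (hx : ∃ M : ℝ, ∀ n, ‖x n‖ ≤ M) :
    (∃ φ : ℕ → ℕ, StrictMono φ ∧ WeakCauchy 𝕜 (x ∘ φ)) ∨
    (∃ φ : ℕ → ℕ, StrictMono φ ∧ EquivL1Basis 𝕜 (x ∘ φ)) := by
  open Rosenthal in
  obtain ⟨M, hM⟩ := hx
  obtain ⟨z, w, ρ, hρ, hsep⟩ := exists_separating_balls 𝕜
  set Az := fun i => dualBallNear x (z i) (ρ i)
  set Aw := fun i => dualBallNear x (w i) (ρ i)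
  obtain ⟨θ, hθ, d, hd, hdθ⟩ := exists_nested_subseq_diag
    (fun i φ => IndependentPairs (Az i ∘ φ) (Aw i ∘ φ) ∨ ConvergentPairs (Az i ∘ φ) (Aw i ∘ φ))
    fun i φ => exists_strictMono_independentPairs_or_convergentPairs (Az i ∘ φ) (Aw i ∘ φ)
  by_cases hind : ∃ i, IndependentPairs (Az i ∘ θ i) (Aw i ∘ θ i)
  · obtain ⟨i, hi⟩ := hind
    exact Or.inr ⟨θ i, (hθ i).1, equivL1Basis_of_independentPairs (fun n => hM _) (hρ i) hi⟩
  · push Not at hind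
    exact Or.inl ⟨d, hd, weakCauchy_of_convergentPairs (fun n => hM _) hsep fun i =>
      ((hθ i).2.resolve_left (hind i)).comp_of_forall_exists_ge (hdθ i)⟩

/-- Every bounded sequence in a real or complex Banach space has either a weak-Cauchy
subsequence or a subsequence equivalent to the standard ℓ¹-basis. -/
theorem rosenthal_l1_theorem {𝕜 : Type*} [RCLike 𝕜] {B : Type*} [NormedAddCommGroup B]
    [NormedSpace 𝕜 B] [CompleteSpace B] (x : ℕ → B) (hx : ∃ M : ℝ, ∀ n, ‖x n‖ ≤ M) :
    (∃ φ : ℕ → ℕ, StrictMono φ ∧ WeakCauchy 𝕜 (x ∘ φ)) ∨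
    (∃ φ : ℕ → ℕ, StrictMono φ ∧ EquivL1Basis 𝕜 (x ∘ φ)) :=
  rosenthal_l1_theorem_general x hx
end

section
/- If (b_j) is a strongly summing basic sequence in a Banach space and (b_j^*) are its biorthogonal functionals in the dual of the closed linear span [b_j], then the sequence of partial sums (Σ_{j=1}^n b_j^*)_{n≥1} is a weak-Cauchy sequence in [b_j]^* which does not converge weakly; consequently [b_j]^* is not weakly sequentially complete. -/
open Filter Topology

/-! With `P_n` the basis projections, `f (∑_{j<n} F(b_j^*) b_j) = F (f ∘ P_n)` for `F` in the
bidual, so these vectors are bounded by `sup_n ‖P_n‖ ‖F‖` and strong summability makes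
`∑ F(b_j^*)` converge. On the other hand the weak limit `G` of `(b_i)` in the bidual kills every
partial sum `∑_{j ≤ n} b_j^*`, but would take the value `1` at a weak limit `φ` of them, since
`φ(b_i) = 1` for all `i`. -/

namespace IsBasicSeq

variable {𝕜 : Type*} [RCLike 𝕜] {X : Type*} [NormedAddCommGroup X] [NormedSpace 𝕜 X]

lemma exists_nonneg_bound {b : ℕ → X} (hb : IsBasicSeq 𝕜 b) :
    ∃ Λ : ℝ, 0 ≤ Λ ∧ ∀ (c : ℕ → 𝕜) (k n : ℕ), k ≤ n →
      ‖∑ i ∈ Finset.range k, c i • b i‖ ≤ Λ * ‖∑ i ∈ Finset.range n, c i • b i‖ := by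
  obtain ⟨-, Λ, hΛ⟩ := hb
  exact ⟨max Λ 0, le_max_right _ _, fun c k n hkn =>
    (hΛ c k n hkn).trans (mul_le_mul_of_nonneg_right (le_max_left _ _) (norm_nonneg _))⟩

end IsBasicSeq

lemma WeakCauchy.exists_tendsto_bidual {𝕜 : Type*} [RCLike 𝕜] {X : Type*} [NormedAddCommGroup X]
    [NormedSpace 𝕜 X] {x : ℕ → X} (hx : WeakCauchy 𝕜 x) :
    ∃ G : (X →L[𝕜] 𝕜) →L[𝕜] 𝕜, ∀ f, Tendsto (fun n => f (x n)) atTop (𝓝 (G f)) := by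
  choose L hL using hx
  exact ⟨continuousLinearMapOfTendsto (fun n => ContinuousLinearMap.apply 𝕜 𝕜 (x n))
    (tendsto_pi_nhds.2 hL), hL⟩

section Biorthogonal

open Finset

variable {𝕜 : Type*} [RCLike 𝕜] {X : Type*} [NormedAddCommGroup X] [NormedSpace 𝕜 X]

lemma exists_eq_sum_range_of_mem_span_range {b : ℕ → X} {x : X}
    (hx : x ∈ Submodule.span 𝕜 (Set.range b)) :
    ∃ (n : ℕ) (a : ℕ → 𝕜), x = ∑ i ∈ range n, a i • b i := by
  obtain ⟨c, rfl⟩ := Finsupp.mem_span_range_iff_exists_finsupp.mp hx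
  refine ⟨c.support.sup id + 1, c, sum_subset (fun i hi => ?_) fun i _ hi => ?_⟩
  · exact mem_range.mpr (Nat.lt_succ_of_le (le_sup (f := id) hi))
  · simp [Finsupp.notMem_support_iff.mp hi]

noncomputable def basisProj (b : ℕ → X) (bstar : ℕ → X →L[𝕜] 𝕜) (k : ℕ) : X →L[𝕜] X :=
  ∑ j ∈ range k, (bstar j).smulRight (b j)

@[simp]
lemma basisProj_apply (b : ℕ → X) (bstar : ℕ → X →L[𝕜] 𝕜) (k : ℕ) (x : X) :
    basisProj b bstar k x = ∑ j ∈ range k, bstar j x • b j := by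
  simp [basisProj]

variable {b : ℕ → X} {bstar : ℕ → X →L[𝕜] 𝕜}

lemma sum_biorthogonal_apply (hbi : ∀ i j, bstar j (b i) = if i = j then 1 else 0) (n i : ℕ) :
    (∑ j ∈ range n, bstar j) (b i) = if i < n then 1 else 0 := by
  simp [hbi]

lemma biorthogonal_apply_sum (hbi : ∀ i j, bstar j (b i) = if i = j then 1 else 0)
    (n : ℕ) (a : ℕ → 𝕜) (j : ℕ) :
    bstar j (∑ i ∈ range n, a i • b i) = if j < n then a j else 0 := by
  simp [map_sum, hbi]

lemma basisProj_sum (hbi : ∀ i j, bstar j (b i) = if i = j then 1 else 0)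
    (k n : ℕ) (a : ℕ → 𝕜) :
    basisProj b bstar k (∑ i ∈ range n, a i • b i) = ∑ i ∈ range (min k n), a i • b i := by
  simp only [basisProj_apply, biorthogonal_apply_sum hbi, ite_smul, zero_smul,
    ← range_inter_range, ← sum_ite_mem, mem_range]

lemma norm_basisProj_le (hdense : Dense (Submodule.span 𝕜 (Set.range b) : Set X))
    (hbi : ∀ i j, bstar j (b i) = if i = j then 1 else 0) {Λ : ℝ} (hΛ : 0 ≤ Λ)
    (hbound : ∀ (c : ℕ → 𝕜) (k n : ℕ), k ≤ n →
      ‖∑ i ∈ range k, c i • b i‖ ≤ Λ * ‖∑ i ∈ range n, c i • b i‖) (k : ℕ) :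
    ‖basisProj b bstar k‖ ≤ Λ := by
  refine (basisProj b bstar k).opNorm_le_bound hΛ fun x => hdense.induction (fun y hy => ?_)
    (isClosed_le (basisProj b bstar k).continuous.norm (continuous_const.mul continuous_norm)) x
  obtain ⟨n, a, rfl⟩ := exists_eq_sum_range_of_mem_span_range hy
  rw [basisProj_sum hbi]
  exact hbound a _ n (min_le_right k n)

lemma comp_basisProj (f : X →L[𝕜] 𝕜) (n : ℕ) :
    f.comp (basisProj b bstar n) = ∑ j ∈ range n, f (b j) • bstar j := by
  ext x
  simp [map_sum, mul_comm]

lemma norm_sum_bidual_biorthogonal_smul_le (F : (X →L[𝕜] 𝕜) →L[𝕜] 𝕜) (n : ℕ) :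
    ‖∑ j ∈ range n, F (bstar j) • b j‖ ≤ ‖basisProj b bstar n‖ * ‖F‖ := by
  refine NormedSpace.norm_le_dual_bound 𝕜 _ (by positivity) fun f => ?_
  have hcomp : f (∑ j ∈ range n, F (bstar j) • b j) = F (f.comp (basisProj b bstar n)) := by
    rw [comp_basisProj, map_sum, map_sum]
    simp only [map_smul, smul_eq_mul, mul_comm]
  rw [hcomp]
  calc ‖F (f.comp (basisProj b bstar n))‖ ≤ ‖F‖ * (‖f‖ * ‖basisProj b bstar n‖) :=
        (F.le_opNorm _).trans (by gcongr; exact f.opNorm_comp_le _)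
    _ = ‖basisProj b bstar n‖ * ‖F‖ * ‖f‖ := by ring

lemma weakCauchy_sum_biorthogonal
    (hsum : ∀ c : ℕ → 𝕜, (∃ M : ℝ, ∀ n, ‖∑ j ∈ range n, c j • b j‖ ≤ M) →
      ∃ l : 𝕜, Tendsto (fun n => ∑ j ∈ range n, c j) atTop (𝓝 l))
    {Λ : ℝ} (hP : ∀ n, ‖basisProj b bstar n‖ ≤ Λ) :
    WeakCauchy 𝕜 (fun n => ∑ j ∈ range (n + 1), bstar j) := by
  intro F
  obtain ⟨l, hl⟩ := hsum (fun j => F (bstar j)) ⟨Λ * ‖F‖, fun n =>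
    (norm_sum_bidual_biorthogonal_smul_le F n).trans (by gcongr; exact hP n)⟩
  exact ⟨l, by simpa only [map_sum, Function.comp_def] using hl.comp (tendsto_add_atTop_nat 1)⟩

lemma not_weaklyConvergent_sum_biorthogonal (hwc : WeakCauchy 𝕜 b)
    (hbi : ∀ i j, bstar j (b i) = if i = j then 1 else 0) :
    ¬ WeaklyConvergent 𝕜 (fun n => ∑ j ∈ range (n + 1), bstar j) := by
  rintro ⟨φ, hφ⟩
  obtain ⟨G, hG⟩ := hwc.exists_tendsto_bidual
  have hφb : ∀ i, φ (b i) = 1 := fun i => tendsto_nhds_unique (hφ (.apply 𝕜 𝕜 (b i)))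
    (tendsto_const_nhds.congr' <| (eventually_ge_atTop i).mono fun n hn => by
      simp only [ContinuousLinearMap.apply_apply, sum_biorthogonal_apply hbi,
        if_pos (Nat.lt_succ_of_le hn)])
  have hGs : ∀ n, G (∑ j ∈ range (n + 1), bstar j) = 0 := fun n =>
    tendsto_nhds_unique (hG _) (tendsto_const_nhds.congr' <|
      (eventually_ge_atTop (n + 1)).mono fun i hi => by
        simp [sum_biorthogonal_apply hbi, not_lt.2 hi])
  have hGφ : G φ = 1 := tendsto_nhds_unique (hG φ) (by simp [hφb])
  have hGφ' : G φ = 0 := tendsto_nhds_unique (hφ G) (by simp [hGs])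
  exact one_ne_zero (hGφ.symm.trans hGφ')

end Biorthogonal

theorem dual_not_wsc_of_stronglySumming_general {𝕜 : Type*} [RCLike 𝕜] {X : Type*}
    [NormedAddCommGroup X] [NormedSpace 𝕜 X] (b : ℕ → X)
    (hdense : Dense (Submodule.span 𝕜 (Set.range b) : Set X))
    (hss : StronglySumming 𝕜 b)
    (bstar : ℕ → X →L[𝕜] 𝕜)
    (hbi : ∀ i j, bstar j (b i) = if i = j then 1 else 0) :
    WeakCauchy 𝕜 (fun n => ∑ j ∈ Finset.range (n + 1), bstar j) ∧
    ¬ WeaklyConvergent 𝕜 (fun n => ∑ j ∈ Finset.range (n + 1), bstar j) ∧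
    ¬ WeaklySeqComplete 𝕜 (X →L[𝕜] 𝕜) := by
  obtain ⟨hwc, hbasic, hsum⟩ := hss
  obtain ⟨Λ, hΛ, hbound⟩ := hbasic.exists_nonneg_bound
  have hcauchy := weakCauchy_sum_biorthogonal hsum (norm_basisProj_le hdense hbi hΛ hbound)
  have hdiv := not_weaklyConvergent_sum_biorthogonal hwc hbi
  exact ⟨hcauchy, hdiv, fun hwsc => hdiv (hwsc _ hcauchy)⟩

/-- If (b_j) is a strongly summing basic sequence spanning the Banach space X = [b_j],
with biorthogonal functionals (b_j^*), then the partial sums of (b_j^*) form a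
non-trivial weak-Cauchy sequence in X^*; hence X^* is not weakly sequentially complete. -/
theorem dual_not_wsc_of_stronglySumming {𝕜 : Type*} [RCLike 𝕜] {X : Type*}
    [NormedAddCommGroup X] [NormedSpace 𝕜 X] [CompleteSpace X] (b : ℕ → X)
    (hdense : Dense (Submodule.span 𝕜 (Set.range b) : Set X))
    (hss : StronglySumming 𝕜 b)
    (bstar : ℕ → X →L[𝕜] 𝕜)
    (hbi : ∀ i j, bstar j (b i) = if i = j then 1 else 0) :
    WeakCauchy 𝕜 (fun n => ∑ j ∈ Finset.range (n + 1), bstar j) ∧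
    ¬ WeaklyConvergent 𝕜 (fun n => ∑ j ∈ Finset.range (n + 1), bstar j) ∧
    ¬ WeaklySeqComplete 𝕜 (X →L[𝕜] 𝕜) :=
  dual_not_wsc_of_stronglySumming_general b hdense hss bstar hbi
end

section
/- No strongly summing sequence has a convex block basis equivalent to the summing basis; that is, the two alternatives of the c₀-theorem are mutually exclusive. -/
open Filter Topology

/-!
Feed the alternating coefficients `(-1)^j` into the upper summing-basis estimate: the partial
sums of `∑ (-1)^j u_j` stay bounded. Expanded in `b`, this is a series `∑ d_i b_i` whose partial
sums are bounded at the block ends, hence everywhere by the basis constant of `b`, so strong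
summability makes `∑ d_i` converge. But every block has total weight one, so the partial sums
of `d` at the block ends are those of `∑ (-1)^j`, which oscillate between `1` and `0`.
-/

open Finset

section Blocks

variable {R V : Type*} [Semiring R] [AddCommMonoid V] [Module R V]

/-- The index `j` of the block `Ioc (n j) (n (j + 1))` containing `i`, when `n 0 < i`. -/
def blockIndex (n : ℕ → ℕ) (i : ℕ) : ℕ := Nat.findGreatest (fun j => n j < i) i

theorem blockIndex_eq {n : ℕ → ℕ} (hn : StrictMono n) {i j : ℕ} (h1 : n j < i)
    (h2 : i ≤ n (j + 1)) : blockIndex n i = j := by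
  have hji : j ≤ i := hn.le_apply.trans h1.le
  refine le_antisymm ?_ (Nat.le_findGreatest hji h1)
  by_contra! hlt
  have hspec : n (blockIndex n i) < i := Nat.findGreatest_spec (P := fun j => n j < i) hji h1
  have : n (j + 1) ≤ n (blockIndex n i) := hn.monotone hlt
  omega

/-- The coefficients of `∑ j, a j • ∑ i ∈ Ioc (n j) (n (j + 1)), c i • f i` with respect to `f`. -/
def blockCoeff (n : ℕ → ℕ) (c a : ℕ → R) (i : ℕ) : R :=
  if n 0 < i then a (blockIndex n i) * c i else 0

theorem sum_range_blockCoeff_smul {n : ℕ → ℕ} (hn : StrictMono n) (c a : ℕ → R) (f : ℕ → V)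
    (m : ℕ) :
    ∑ i ∈ range (n m + 1), blockCoeff n c a i • f i
      = ∑ j ∈ range m, a j • ∑ i ∈ Ioc (n j) (n (j + 1)), c i • f i := by
  induction m with
  | zero =>
    refine sum_eq_zero fun i hi => ?_
    rw [mem_range] at hi
    rw [blockCoeff, if_neg (by omega), zero_smul]
  | succ m ih =>
    rw [← sum_range_add_sum_Ico _ (Nat.add_le_add_right (hn.monotone m.le_succ) 1), ih,
      sum_range_succ, Ico_add_one_add_one_eq_Ioc, smul_sum]
    congr 1
    refine sum_congr rfl fun i hi => ?_
    rw [mem_Ioc] at hi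
    rw [blockCoeff, if_pos ((hn.monotone m.zero_le).trans_lt hi.1), blockIndex_eq hn hi.1 hi.2,
      mul_smul]

theorem sum_range_blockCoeff {n : ℕ → ℕ} (hn : StrictMono n) (c a : ℕ → R) (m : ℕ) :
    ∑ i ∈ range (n m + 1), blockCoeff n c a i
      = ∑ j ∈ range m, a j * ∑ i ∈ Ioc (n j) (n (j + 1)), c i := by
  simpa only [smul_eq_mul, mul_one] using sum_range_blockCoeff_smul hn c a (fun _ => (1 : R)) m

end Blocks

section NegOnePow

variable {R : Type*} [NormedDivisionRing R]

theorem norm_sum_range_neg_one_pow_le_one (k : ℕ) : ‖∑ i ∈ range k, (-1 : R) ^ i‖ ≤ 1 := by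
  rw [neg_one_geom_sum]
  split_ifs <;> simp

theorem not_tendsto_sum_range_neg_one_pow (l : R) :
    ¬ Tendsto (fun m => ∑ i ∈ range m, (-1 : R) ^ i) atTop (𝓝 l) := by
  intro h
  have hterm : Tendsto (fun m => (-1 : R) ^ m) atTop (𝓝 0) := by
    simpa only [Function.comp_apply, sum_range_succ_sub_sum, sub_self] using
      (h.comp (tendsto_add_atTop_nat 1)).sub h
  have := hterm.norm
  simp only [norm_pow, norm_neg, norm_one, one_pow, norm_zero] at this
  exact one_ne_zero (tendsto_const_nhds_iff.mp this)

end NegOnePow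

section Sequences

variable {𝕜 : Type*} [RCLike 𝕜] {B : Type*} [NormedAddCommGroup B] [NormedSpace 𝕜 B]

theorem IsBasicSeq.exists_bound_of_bound_subseq {x : ℕ → B} (hx : IsBasicSeq 𝕜 x)
    {c : ℕ → 𝕜} {N : ℕ → ℕ} (hN : ∀ k, k ≤ N k) {M : ℝ}
    (hM : ∀ m, ‖∑ i ∈ range (N m), c i • x i‖ ≤ M) :
    ∃ M' : ℝ, ∀ k, ‖∑ i ∈ range k, c i • x i‖ ≤ M' := by
  obtain ⟨-, Λ, hΛ⟩ := hx
  refine ⟨|Λ| * M, fun k => ?_⟩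
  calc ‖∑ i ∈ range k, c i • x i‖
      ≤ Λ * ‖∑ i ∈ range (N k), c i • x i‖ := hΛ c k (N k) (hN k)
    _ ≤ |Λ| * ‖∑ i ∈ range (N k), c i • x i‖ :=
        mul_le_mul_of_nonneg_right (le_abs_self Λ) (norm_nonneg _)
    _ ≤ |Λ| * M := mul_le_mul_of_nonneg_left (hM k) (abs_nonneg Λ)

theorem EquivSummingBasis.exists_norm_sum_smul_le {u : ℕ → B} (hu : EquivSummingBasis 𝕜 u) :
    ∃ C : ℝ, ∀ (a : ℕ → 𝕜) (M : ℝ), (∀ k, ‖∑ i ∈ range k, a i‖ ≤ M) →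
      ∀ n, ‖∑ i ∈ range n, a i • u i‖ ≤ C * M := by
  obtain ⟨_, C, -, hE⟩ := hu
  refine ⟨|C|, fun a M ha n => ?_⟩
  obtain ⟨k, -, hk⟩ := (hE n a).2
  calc ‖∑ i ∈ range n, a i • u i‖ ≤ C * ‖∑ i ∈ range k, a i‖ := hk
    _ ≤ |C| * ‖∑ i ∈ range k, a i‖ := mul_le_mul_of_nonneg_right (le_abs_self C) (norm_nonneg _)
    _ ≤ |C| * M := mul_le_mul_of_nonneg_left (ha k) (abs_nonneg C)

end Sequences

theorem ss_not_equiv_summing_general {𝕜 : Type*} [RCLike 𝕜] {B : Type*} [NormedAddCommGroup B]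
    [NormedSpace 𝕜 B] (b u : ℕ → B)
    (hss : StronglySumming 𝕜 b) (hcb : ConvexBlockBasis 𝕜 b u) :
    ¬ EquivSummingBasis 𝕜 u := by
  intro hu
  obtain ⟨C, hC⟩ := hu.exists_norm_sum_smul_le
  obtain ⟨-, hbasic, hsumming⟩ := hss
  obtain ⟨n, c, hn, -, hc1, hub⟩ := hcb
  set d := blockCoeff n (fun i => (c i : 𝕜)) (fun j => (-1 : 𝕜) ^ j) with hd
  have hd_bdd : ∀ m, ‖∑ i ∈ range (n m + 1), d i • b i‖ ≤ C * 1 := fun m => by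
    simpa only [hd, sum_range_blockCoeff_smul hn, ← hub] using
      hC _ 1 norm_sum_range_neg_one_pow_le_one m
  obtain ⟨l, hl⟩ := hsumming d (hbasic.exists_bound_of_bound_subseq
    (fun k => hn.le_apply.trans (n k).le_succ) hd_bdd)
  have hboundary : Tendsto (fun m => n m + 1) atTop atTop := (hn.add_const 1).tendsto_atTop
  refine not_tendsto_sum_range_neg_one_pow l ((hl.comp hboundary).congr fun m => ?_)
  simp only [Function.comp_apply, hd, sum_range_blockCoeff hn, ← RCLike.ofReal_sum, hc1,
    RCLike.ofReal_one, mul_one]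

/-- The alternatives of the c₀-theorem are mutually exclusive: no strongly summing
sequence has a convex block basis equivalent to the summing basis. -/
theorem ss_not_equiv_summing {𝕜 : Type*} [RCLike 𝕜] {B : Type*} [NormedAddCommGroup B]
    [NormedSpace 𝕜 B] [CompleteSpace B] (b u : ℕ → B)
    (hss : StronglySumming 𝕜 b) (hcb : ConvexBlockBasis 𝕜 b u) :
    ¬ EquivSummingBasis 𝕜 u :=
  ss_not_equiv_summing_general b u hss hcb
end

section
/- Let K be a compact metric space and f : K → ℂ a bounded function. Then f belongs to D(K), i.e., f = (u₁ - u₂) + i(u₃ - u₄) for bounded lower semicontinuous functions u₁,…,u₄, if and only if there exists a sequence (φ_j) of continuous functions on K with sup_{k∈K} Σ_j |φ_j(k)| < ∞ and Σ_j φ_j(k) = f(k) for every k ∈ K. -/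
open Filter Topology

section DKdefs
variable {K : Type*} [MetricSpace K] [CompactSpace K]

/-- A bounded lower semicontinuous real function. -/
def BddLSC (u : K → ℝ) : Prop := LowerSemicontinuous u ∧ ∃ M : ℝ, ∀ x, |u x| ≤ M

/-- `f ∈ D(K)`: `f = (u₁ - u₂) + i(u₃ - u₄)` with the `uᵢ` bounded lower semicontinuous. -/
def MemDK (f : K → ℂ) : Prop :=
  ∃ u₁ u₂ u₃ u₄ : K → ℝ, BddLSC u₁ ∧ BddLSC u₂ ∧ BddLSC u₃ ∧ BddLSC u₄ ∧
    ∀ x, f x = ((u₁ x - u₂ x : ℝ) : ℂ) + Complex.I * ((u₃ x - u₄ x : ℝ) : ℂ)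

/-- `f ∈ D(K)` for real `f`: a difference of bounded lower semicontinuous functions. -/
def MemDKReal (f : K → ℝ) : Prop :=
  ∃ u₁ u₂ : K → ℝ, BddLSC u₁ ∧ BddLSC u₂ ∧ ∀ x, f x = u₁ x - u₂ x

/-- Upper semicontinuous envelope `Ug(x) = limsup_{y → x} g(y)` (non-exclusive limsup). -/
noncomputable def uscEnv (g : K → EReal) : K → EReal := fun x => limsup g (𝓝 x)

/-- The transfinite oscillations `osc_β f` of a complex-valued function. -/
noncomputable def oscOrd (f : K → ℂ) (β : Ordinal) : K → EReal :=
  Ordinal.limitRecOn β (fun _ => (0 : EReal))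
    (fun _ ih => uscEnv fun x =>
      limsup (fun y => ((‖f y - f x‖ : ℝ) : EReal) + ih y) (𝓝 x))
    (fun β _ ih => uscEnv fun x => ⨆ (α : Ordinal) (h : α < β), ih α h x)

/-- The transfinite oscillations `osc_β f` of a real-valued function. -/
noncomputable def oscOrdR (f : K → ℝ) (β : Ordinal) : K → EReal :=
  Ordinal.limitRecOn β (fun _ => (0 : EReal))
    (fun _ ih => uscEnv fun x =>
      limsup (fun y => ((|f y - f x| : ℝ) : EReal) + ih y) (𝓝 x))
    (fun β _ ih => uscEnv fun x => ⨆ (α : Ordinal) (h : α < β), ih α h x)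

/-- The positive transfinite oscillations `v_β f` of a real-valued function
(as `osc_β`, but with `f y - f x` in place of `|f y - f x|`). -/
noncomputable def vOrd (f : K → ℝ) (β : Ordinal) : K → EReal :=
  Ordinal.limitRecOn β (fun _ => (0 : EReal))
    (fun _ ih => uscEnv fun x =>
      limsup (fun y => ((f y - f x : ℝ) : EReal) + ih y) (𝓝 x))
    (fun β _ ih => uscEnv fun x => ⨆ (α : Ordinal) (h : α < β), ih α h x)

/-- The `D(K)`-norm of a real function: the infimum of `sup_{x} Σ_j |φ_j x|` over all
pointwise representations `f = Σ_j φ_j` with `φ_j` continuous. -/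
noncomputable def DNorm (f : K → ℝ) : ℝ :=
  sInf {M : ℝ | ∃ φ : ℕ → K → ℝ, (∀ j, Continuous (φ j)) ∧
    (∀ x, HasSum (fun j => φ j x) (f x)) ∧
    (∀ x, Summable fun j => |φ j x|) ∧ ∀ x, (∑' j, |φ j x|) ≤ M}

end DKdefs

/-!
A bounded lower semicontinuous `u` on a metric space is the increasing pointwise limit of the
Lipschitz functions `x ↦ inf_y (u y + n * dist x y)` (Baire), so it telescopes into a series
of continuous functions whose absolute values sum to at most `3 sup |u|`; such series
representations add and push forward along bounded linear maps. Conversely, a sum of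
nonnegative continuous functions is lower semicontinuous, so the positive and negative parts
of the real and imaginary parts of a representing series give the four functions of `D(K)`.
-/

section SeriesRep

variable {X E F : Type*} [TopologicalSpace X] [SeminormedAddCommGroup E]
  [SeminormedAddCommGroup F]

def HasContinuousSeriesRep (f : X → E) : Prop :=
  ∃ φ : ℕ → X → E, (∀ j, Continuous (φ j)) ∧
    (∀ x, Summable fun j => ‖φ j x‖) ∧
    (∃ M : ℝ, ∀ x, (∑' j, ‖φ j x‖) ≤ M) ∧
    ∀ x, HasSum (fun j => φ j x) (f x)

theorem Continuous.hasContinuousSeriesRep {g : X → E} {M : ℝ} (hg : Continuous g)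
    (hM : ∀ x, ‖g x‖ ≤ M) : HasContinuousSeriesRep g := by
  refine ⟨fun j x => if j = 0 then g x else 0, fun j => ?_, fun x => ?_, ⟨M, fun x => ?_⟩,
    fun x => hasSum_ite_eq 0 (g x)⟩
  · exact continuous_if_const _ (fun _ => hg) fun _ => continuous_const
  · simpa only [apply_ite, norm_zero] using (hasSum_ite_eq 0 ‖g x‖).summable
  · simpa only [apply_ite, norm_zero, (hasSum_ite_eq 0 ‖g x‖).tsum_eq] using hM x

theorem hasContinuousSeriesRep_of_hasSum_of_nonneg {ψ : ℕ → X → ℝ} {v : X → ℝ} {M : ℝ}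
    (hc : ∀ j, Continuous (ψ j)) (hnn : ∀ j x, 0 ≤ ψ j x)
    (hψ : ∀ x, HasSum (fun j => ψ j x) (v x)) (hM : ∀ x, v x ≤ M) :
    HasContinuousSeriesRep v := by
  have hnorm : ∀ x, (fun j => ‖ψ j x‖) = fun j => ψ j x :=
    fun x => funext fun j => Real.norm_of_nonneg (hnn j x)
  refine ⟨ψ, hc, fun x => ?_, ⟨M, fun x => ?_⟩, hψ⟩
  · rw [hnorm]
    exact (hψ x).summable
  · rw [hnorm, (hψ x).tsum_eq]
    exact hM x

theorem HasContinuousSeriesRep.add {f g : X → E} (hf : HasContinuousSeriesRep f)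
    (hg : HasContinuousSeriesRep g) : HasContinuousSeriesRep (f + g) := by
  obtain ⟨φ, hφc, hφs, ⟨M, hM⟩, hφ⟩ := hf
  obtain ⟨ψ, hψc, hψs, ⟨N, hN⟩, hψ⟩ := hg
  let e := Equiv.natSumNatEquivNat.symm
  have hnorm : ∀ x, HasSum (fun n => ‖Sum.elim φ ψ (e n) x‖)
      ((∑' j, ‖φ j x‖) + ∑' j, ‖ψ j x‖) := fun x =>
    (e.hasSum_iff (f := fun i => ‖Sum.elim φ ψ i x‖)).2 ((hφs x).hasSum.sum (hψs x).hasSum)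
  refine ⟨fun n => Sum.elim φ ψ (e n), fun n => ?_, fun x => (hnorm x).summable,
    ⟨M + N, fun x => (hnorm x).tsum_eq ▸ add_le_add (hM x) (hN x)⟩, fun x => ?_⟩
  · change Continuous (Sum.elim φ ψ (e n))
    rcases e n with j | j
    exacts [hφc j, hψc j]
  · exact (e.hasSum_iff (f := fun i => Sum.elim φ ψ i x)).2 ((hφ x).sum (hψ x))

theorem HasContinuousSeriesRep.neg {f : X → E} (hf : HasContinuousSeriesRep f) :
    HasContinuousSeriesRep (-f) := by
  obtain ⟨φ, hφc, hφs, hM, hφ⟩ := hf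
  exact ⟨fun j => -φ j, fun j => (hφc j).neg, by simpa using hφs, by simpa using hM,
    fun x => (hφ x).neg⟩

theorem HasContinuousSeriesRep.sub {f g : X → E} (hf : HasContinuousSeriesRep f)
    (hg : HasContinuousSeriesRep g) : HasContinuousSeriesRep (f - g) :=
  sub_eq_add_neg f g ▸ hf.add hg.neg

theorem HasContinuousSeriesRep.map {𝕜 : Type*} [NontriviallyNormedField 𝕜] [NormedSpace 𝕜 E]
    [NormedSpace 𝕜 F] {f : X → E} (hf : HasContinuousSeriesRep f) (L : E →L[𝕜] F) :
    HasContinuousSeriesRep fun x => L (f x) := by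
  obtain ⟨φ, hφc, hφs, ⟨M, hM⟩, hφ⟩ := hf
  have hle : ∀ j x, ‖L (φ j x)‖ ≤ ‖L‖ * ‖φ j x‖ := fun j x => L.le_opNorm _
  have hs : ∀ x, Summable fun j => ‖L (φ j x)‖ := fun x =>
    .of_nonneg_of_le (fun _ => norm_nonneg _) (hle · x) ((hφs x).mul_left ‖L‖)
  refine ⟨fun j x => L (φ j x), fun j => L.continuous.comp (hφc j), hs,
    ⟨‖L‖ * M, fun x => ?_⟩, fun x => (hφ x).mapL L⟩
  calc ∑' j, ‖L (φ j x)‖ ≤ ∑' j, ‖L‖ * ‖φ j x‖ :=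
        (hs x).tsum_le_tsum (hle · x) ((hφs x).mul_left ‖L‖)
    _ = ‖L‖ * ∑' j, ‖φ j x‖ := tsum_mul_left
    _ ≤ ‖L‖ * M := mul_le_mul_of_nonneg_left (hM x) (norm_nonneg L)

end SeriesRep

theorem hasSum_sub_of_monotone_of_tendsto {a : ℕ → ℝ} {l : ℝ} (ha : Monotone a)
    (hl : Tendsto a atTop (𝓝 l)) : HasSum (fun n => a (n + 1) - a n) (l - a 0) := by
  refine (hasSum_iff_tendsto_nat_of_nonneg (fun n => sub_nonneg.2 (ha n.le_succ)) _).2 ?_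
  simpa only [Finset.sum_range_sub] using hl.sub_const (a 0)

theorem lowerSemicontinuous_tsum_of_nonneg {X ι : Type*} [TopologicalSpace X]
    {g : ι → X → ℝ} (hc : ∀ i, Continuous (g i)) (hnn : ∀ i x, 0 ≤ g i x)
    (hs : ∀ x, Summable fun i => g i x) : LowerSemicontinuous fun x => ∑' i, g i x := by
  have hlub : ∀ x, IsLUB (Set.range fun s => ∑ i ∈ s, g i x) (∑' i, g i x) :=
    fun x => isLUB_hasSum (hnn · x) (hs x).hasSum
  simp_rw [fun x => ((hlub x).ciSup_eq).symm]
  exact lowerSemicontinuous_ciSup (fun x => (hlub x).bddAbove)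
    fun s => (continuous_finsetSum s fun i _ => hc i).lowerSemicontinuous

section LipMinorant

variable {X : Type*} [PseudoMetricSpace X] {u : X → ℝ} {m : ℝ}

/-- The largest `n`-Lipschitz minorant of `u` (when `u` is bounded below). -/
noncomputable def lipMinorant (u : X → ℝ) (n : ℕ) (x : X) : ℝ := ⨅ y, u y + n * dist x y

theorem le_add_mul_dist_of_le (hm : ∀ y, m ≤ u y) (n : ℕ) (x y : X) :
    m ≤ u y + n * dist x y :=
  le_add_of_le_of_nonneg (hm y) (by positivity)

theorem lipMinorant_le_add_mul_dist (hm : ∀ y, m ≤ u y) (n : ℕ) (x y : X) :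
    lipMinorant u n x ≤ u y + n * dist x y :=
  ciInf_le ⟨m, Set.forall_mem_range.2 (le_add_mul_dist_of_le hm n x)⟩ y

theorem lipMinorant_le (hm : ∀ y, m ≤ u y) (n : ℕ) (x : X) : lipMinorant u n x ≤ u x := by
  simpa using lipMinorant_le_add_mul_dist hm n x x

theorem le_lipMinorant (hm : ∀ y, m ≤ u y) (n : ℕ) (x : X) : m ≤ lipMinorant u n x :=
  have : Nonempty X := ⟨x⟩
  le_ciInf (le_add_mul_dist_of_le hm n x)

theorem lipschitzWith_lipMinorant (hm : ∀ y, m ≤ u y) (n : ℕ) :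
    LipschitzWith n (lipMinorant u n) := by
  refine LipschitzWith.of_le_add_mul _ fun x x' => ?_
  have : Nonempty X := ⟨x⟩
  rw [NNReal.coe_natCast, ← sub_le_iff_le_add]
  refine le_ciInf fun y => ?_
  have := lipMinorant_le_add_mul_dist hm n x y
  have := dist_triangle x x' y
  have : (0 : ℝ) ≤ n := n.cast_nonneg
  nlinarith

theorem monotone_lipMinorant (hm : ∀ y, m ≤ u y) (x : X) :
    Monotone fun n => lipMinorant u n x := by
  have : Nonempty X := ⟨x⟩
  refine monotone_nat_of_le_succ fun n => le_ciInf fun y => ?_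
  have := lipMinorant_le_add_mul_dist hm n x y
  have := dist_nonneg (x := x) (y := y)
  push_cast
  nlinarith

theorem tendsto_lipMinorant (hu : LowerSemicontinuous u) (hm : ∀ y, m ≤ u y) (x : X) :
    Tendsto (fun n => lipMinorant u n x) atTop (𝓝 (u x)) := by
  have : Nonempty X := ⟨x⟩
  refine tendsto_order.2 ⟨fun a ha => ?_, fun b hb =>
    .of_forall fun n => (lipMinorant_le hm n x).trans_lt hb⟩
  obtain ⟨a', haa', ha'⟩ := exists_between ha
  obtain ⟨δ, hδ, hball⟩ := Metric.eventually_nhds_iff_ball.1 (hu x a' ha')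
  obtain ⟨N, hN⟩ := exists_nat_ge ((a' - m) / δ)
  rw [div_le_iff₀ hδ] at hN
  filter_upwards [eventually_ge_atTop N] with n hn
  refine haa'.trans_le (le_ciInf fun y => ?_)
  rcases lt_or_ge (dist x y) δ with hy | hy
  · exact le_add_of_le_of_nonneg (hball y (Metric.mem_ball'.2 hy)).le (by positivity)
  · have : (N : ℝ) * δ ≤ n * dist x y :=
      mul_le_mul (Nat.cast_le.2 hn) hy hδ.le n.cast_nonneg
    linarith [hm y]

end LipMinorant

theorem LowerSemicontinuous.hasContinuousSeriesRep {X : Type*} [PseudoMetricSpace X]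
    {u : X → ℝ} {M : ℝ} (hu : LowerSemicontinuous u) (hM : ∀ x, |u x| ≤ M) :
    HasContinuousSeriesRep u := by
  have hm : ∀ x, -M ≤ u x := fun x => (abs_le.1 (hM x)).1
  set g := lipMinorant u
  have hcont : ∀ n, Continuous (g n) := fun n => (lipschitzWith_lipMinorant hm n).continuous
  have hg₀ : HasContinuousSeriesRep (g 0) :=
    (hcont 0).hasContinuousSeriesRep fun x =>
      abs_le.2 ⟨le_lipMinorant hm 0 x, (lipMinorant_le hm 0 x).trans (abs_le.1 (hM x)).2⟩
  have hrest : HasContinuousSeriesRep (u - g 0) :=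
    hasContinuousSeriesRep_of_hasSum_of_nonneg (ψ := fun n x => g (n + 1) x - g n x)
      (fun n => (hcont (n + 1)).sub (hcont n))
      (fun n x => sub_nonneg.2 (monotone_lipMinorant hm x n.le_succ))
      (fun x => hasSum_sub_of_monotone_of_tendsto (monotone_lipMinorant hm x)
        (tendsto_lipMinorant hu hm x))
      (M := M + M) fun x => by
        linarith [le_lipMinorant hm 0 x, (abs_le.1 (hM x)).2, Pi.sub_apply u (g 0) x]
  simpa using hg₀.add hrest

section DK

variable {K : Type*} [MetricSpace K]

theorem MemDKReal.hasContinuousSeriesRep {v : K → ℝ} (hv : MemDKReal v) :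
    HasContinuousSeriesRep v := by
  obtain ⟨u₁, u₂, ⟨hu₁, M₁, hM₁⟩, ⟨hu₂, M₂, hM₂⟩, hv⟩ := hv
  rw [show v = u₁ - u₂ from funext hv]
  exact (hu₁.hasContinuousSeriesRep hM₁).sub (hu₂.hasContinuousSeriesRep hM₂)

theorem HasContinuousSeriesRep.memDKReal {v : K → ℝ} (hv : HasContinuousSeriesRep v) :
    MemDKReal v := by
  obtain ⟨φ, hφc, hφs, ⟨M, hM⟩, hφ⟩ := hv
  have hpart : ∀ p : ℝ → ℝ, Continuous p → (∀ t, 0 ≤ p t) → (∀ t, p t ≤ |t|) →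
      (∀ x, Summable fun j => p (φ j x)) ∧ BddLSC fun x => ∑' j, p (φ j x) := by
    intro p hp hnn hle
    have hs : ∀ x, Summable fun j => p (φ j x) := fun x =>
      .of_nonneg_of_le (fun j => hnn _) (fun j => hle _) (hφs x)
    refine ⟨hs, lowerSemicontinuous_tsum_of_nonneg (fun j => hp.comp (hφc j))
      (fun j x => hnn _) hs, M, fun x => abs_le.2 ⟨?_, ?_⟩⟩
    · have : (0 : ℝ) ≤ ∑' j, p (φ j x) := tsum_nonneg fun j => hnn _
      linarith [(hM x).trans' (tsum_nonneg fun j => norm_nonneg (φ j x))]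
    · exact ((hs x).tsum_le_tsum (fun j => hle _) (hφs x)).trans (hM x)
  obtain ⟨hs₁, h₁⟩ := hpart (fun t => max t 0) (continuous_id.max continuous_const)
    (fun _ => le_max_right _ _) fun t => max_le (le_abs_self t) (abs_nonneg t)
  obtain ⟨hs₂, h₂⟩ := hpart (fun t => max (-t) 0) (continuous_neg.max continuous_const)
    (fun _ => le_max_right _ _) fun t => max_le (neg_le_abs t) (abs_nonneg t)
  refine ⟨_, _, h₁, h₂, fun x => ?_⟩
  rw [← (hs₁ x).tsum_sub (hs₂ x)]
  simp only [max_zero_sub_max_neg_zero_eq_self, (hφ x).tsum_eq]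

theorem memDK_iff_memDKReal_re_im {f : K → ℂ} :
    MemDK f ↔ MemDKReal (fun x => (f x).re) ∧ MemDKReal fun x => (f x).im := by
  constructor
  · rintro ⟨u₁, u₂, u₃, u₄, h₁, h₂, h₃, h₄, hf⟩
    exact ⟨⟨u₁, u₂, h₁, h₂, fun x => by simp [hf x]⟩, ⟨u₃, u₄, h₃, h₄, fun x => by simp [hf x]⟩⟩
  · rintro ⟨⟨u₁, u₂, h₁, h₂, hre⟩, ⟨u₃, u₄, h₃, h₄, him⟩⟩
    refine ⟨u₁, u₂, u₃, u₄, h₁, h₂, h₃, h₄, fun x => ?_⟩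
    rw [← hre, ← him, mul_comm]
    exact (Complex.re_add_im (f x)).symm

end DK

theorem memDK_iff_series_rep_general {K : Type*} [MetricSpace K]
    (f : K → ℂ) :
    MemDK f ↔
      ∃ φ : ℕ → K → ℂ, (∀ j, Continuous (φ j)) ∧
        (∀ x, Summable fun j => ‖φ j x‖) ∧
        (∃ M : ℝ, ∀ x, (∑' j, ‖φ j x‖) ≤ M) ∧
        ∀ x, HasSum (fun j => φ j x) (f x) := by
  change MemDK f ↔ HasContinuousSeriesRep f
  rw [memDK_iff_memDKReal_re_im]
  constructor
  · rintro ⟨hre, him⟩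
    have h := (hre.hasContinuousSeriesRep.map Complex.ofRealCLM).add
      (him.hasContinuousSeriesRep.map (Complex.I • Complex.ofRealCLM))
    convert h using 1
    funext x
    simp [mul_comm Complex.I]
  · intro h
    exact ⟨(h.map Complex.reCLM).memDKReal, (h.map Complex.imCLM).memDKReal⟩

/-- A bounded `f : K → ℂ` is in `D(K)` iff it admits a pointwise representation
`f = Σ φ_j` with `φ_j` continuous and `sup_{k ∈ K} Σ_j |φ_j k| < ∞`. -/
theorem memDK_iff_series_rep {K : Type*} [MetricSpace K] [CompactSpace K]
    (f : K → ℂ) (hf : ∃ M : ℝ, ∀ x, ‖f x‖ ≤ M) :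
    MemDK f ↔
      ∃ φ : ℕ → K → ℂ, (∀ j, Continuous (φ j)) ∧
        (∀ x, Summable fun j => ‖φ j x‖) ∧
        (∃ M : ℝ, ∀ x, (∑' j, ‖φ j x‖) ≤ M) ∧
        ∀ x, HasSum (fun j => φ j x) (f x) :=
  memDK_iff_series_rep_general f
end

section
/- A sequence (b_j) in a Banach space is strongly summing if and only if its difference sequence (e_j), defined by e₁ = b₁ and e_j = b_j - b_{j-1} for j > 1, is coefficient converging. -/
open Filter Topology

/-- The difference sequence of (b_j): e₁ = b₁ and e_j = b_j - b_{j-1}. -/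
def diffSeq {B : Type*} [NormedAddCommGroup B] (b : ℕ → B) : ℕ → B
  | 0 => b 0
  | (k + 1) => b (k + 1) - b k

/-!
With `e = diffSeq b` and `S n = ∑ i < n, e i` (the sequence `0, b 0, b 1, …`), summation by parts
gives `∑ i < n, d i • e i = ∑ i < n, (d i - d (i + 1)) • b i + d n • S n`, so coefficients `d` for
`e` correspond to coefficients `c i = d i - d (i + 1)` for `b`, with `∑ j < k, c j = d 0 - d k`;
and `S` stays bounded because `b` is weak-Cauchy.

Convergence of `∑ j < k, c j` (resp. of `d k`) whenever the partial sums are bounded upgrades, by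
the uniform boundedness principle on the Banach space of bounded partial-sum sequences, to the
estimate `‖∑ j < k, c j‖ ≤ K ‖∑ i < n, c i • b i‖` for `k ≤ n` (resp.
`‖d k‖ ≤ K ‖∑ i < n, d i • e i‖` for `k < n`). Under summation by parts these two estimates are
equivalent, and each of them transfers the basis constant and the boundedness of partial sums
from one sequence to the other.
-/

open Finset BoundedContinuousFunction

section

variable {𝕜 : Type*} [RCLike 𝕜] {B : Type*} [NormedAddCommGroup B] [NormedSpace 𝕜 B]

theorem WeakCauchy.exists_forall_norm_le {x : ℕ → B} (h : WeakCauchy 𝕜 x) :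
    ∃ C, 0 ≤ C ∧ ∀ n, ‖x n‖ ≤ C := by
  have hpt (f : StrongDual 𝕜 B) :
      ∃ C, ∀ n, ‖NormedSpace.inclusionInDoubleDual 𝕜 B (x n) f‖ ≤ C := by
    obtain ⟨l, hl⟩ := h f
    obtain ⟨C, hC⟩ := hl.norm.bddAbove_range
    exact ⟨C, fun n => hC (Set.mem_range_self n)⟩
  obtain ⟨C, hC⟩ := banach_steinhaus hpt
  refine ⟨max C 0, le_max_right _ _, fun n => ?_⟩
  rw [← (NormedSpace.inclusionInDoubleDualLi 𝕜).norm_map (x n)]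
  exact (hC n).trans (le_max_left _ _)

section BoundedPartialSums

variable (𝕜 B) in
noncomputable def incrementCLM (n : ℕ) : (ℕ →ᵇ B) →L[𝕜] B := evalCLM 𝕜 (n + 1) - evalCLM 𝕜 n

variable (𝕜) in
/-- The bounded sequences of partial sums `n ↦ ∑ i < n, c i • x i`, as a subspace of `ℕ →ᵇ B`. -/
noncomputable def boundedPartialSums (x : ℕ → B) : Submodule 𝕜 (ℕ →ᵇ B) :=
  LinearMap.ker (evalCLM 𝕜 0 : (ℕ →ᵇ B) →L[𝕜] B).toLinearMap ⊓
    ⨅ n, (𝕜 ∙ x n).comap (incrementCLM 𝕜 B n).toLinearMap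

variable {x : ℕ → B}

theorem mem_boundedPartialSums {f : ℕ →ᵇ B} :
    f ∈ boundedPartialSums 𝕜 x ↔ f 0 = 0 ∧ ∀ n, f (n + 1) - f n ∈ 𝕜 ∙ x n := by
  simp [boundedPartialSums, incrementCLM]

theorem isClosed_boundedPartialSums : IsClosed (boundedPartialSums 𝕜 x : Set (ℕ →ᵇ B)) := by
  simp only [boundedPartialSums, Submodule.coe_inf, Submodule.coe_iInf, Submodule.comap_coe]
  exact (ContinuousLinearMap.isClosed_ker _).inter <| isClosed_iInter fun n =>
    (Submodule.closed_of_finiteDimensional _).preimage (incrementCLM 𝕜 B n).continuous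

instance [CompleteSpace B] : CompleteSpace (boundedPartialSums 𝕜 x) :=
  isClosed_boundedPartialSums.completeSpace_coe

variable (hx : ∀ n, x n ≠ 0)

noncomputable def partialSumCoeff (n : ℕ) : StrongDual 𝕜 (boundedPartialSums 𝕜 x) :=
  (ContinuousLinearEquiv.coord 𝕜 (x n) (hx n)).comp <|
    ((incrementCLM 𝕜 B n).comp (boundedPartialSums 𝕜 x).subtypeL).codRestrict _
      fun f => (mem_boundedPartialSums.1 f.2).2 n

theorem partialSumCoeff_smul (f : boundedPartialSums 𝕜 x) (n : ℕ) :
    partialSumCoeff hx n f • x n = (f : ℕ →ᵇ B) (n + 1) - (f : ℕ →ᵇ B) n :=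
  congrArg Subtype.val <| ContinuousLinearEquiv.toSpanNonzeroSingleton_coord 𝕜 (hx n) _

theorem partialSumCoeff_eq {f : boundedPartialSums 𝕜 x} {n : ℕ} {t : 𝕜}
    (h : (f : ℕ →ᵇ B) (n + 1) - (f : ℕ →ᵇ B) n = t • x n) : partialSumCoeff hx n f = t :=
  smul_left_injective 𝕜 (hx n) <| (partialSumCoeff_smul hx f n).trans h

theorem sum_partialSumCoeff_smul (f : boundedPartialSums 𝕜 x) (n : ℕ) :
    ∑ j ∈ range n, partialSumCoeff hx j f • x j = (f : ℕ →ᵇ B) n := by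
  simp only [partialSumCoeff_smul, sum_range_sub, (mem_boundedPartialSums.1 f.2).1, sub_zero]

theorem exists_partialSumCoeff_eq {Λ : ℝ} (hΛ : ∀ (c : ℕ → 𝕜) (k n : ℕ), k ≤ n →
      ‖∑ i ∈ range k, c i • x i‖ ≤ Λ * ‖∑ i ∈ range n, c i • x i‖) (c : ℕ → 𝕜) (n : ℕ) :
    ∃ f : boundedPartialSums 𝕜 x, ‖f‖ ≤ max Λ 1 * ‖∑ i ∈ range n, c i • x i‖ ∧
      ∀ j < n, partialSumCoeff hx j f = c j := by
  have hbound (m : ℕ) : ‖∑ i ∈ range (min m n), c i • x i‖ ≤ max Λ 1 * ‖∑ i ∈ range n, c i • x i‖ :=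
    (hΛ c _ n (min_le_right m n)).trans <| by gcongr; exact le_max_left _ _
  set f : ℕ →ᵇ B := ofNormedAddCommGroup (fun m => ∑ i ∈ range (min m n), c i • x i)
    continuous_of_discreteTopology _ hbound
  have hf (m : ℕ) : f (m + 1) - f m = if m < n then c m • x m else 0 := by
    simp only [f, coe_ofNormedAddCommGroup]
    split_ifs with hm
    · rw [min_eq_left hm, min_eq_left hm.le, sum_range_succ, add_sub_cancel_left]
    · rw [min_eq_right (not_lt.1 hm), min_eq_right (by omega), sub_self]
  have hfW : f ∈ boundedPartialSums 𝕜 x := by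
    refine mem_boundedPartialSums.2 ⟨by simp [f], fun m => ?_⟩
    rw [hf]
    split_ifs
    exacts [Submodule.smul_mem _ _ (Submodule.mem_span_singleton_self _), zero_mem _]
  refine ⟨⟨f, hfW⟩, norm_ofNormedAddCommGroup_le _ (by positivity) hbound, fun j hj => ?_⟩
  exact partialSumCoeff_eq hx <| (hf j).trans (if_pos hj)

end BoundedPartialSums

theorem IsBasicSeq.exists_norm_sum_le [CompleteSpace B] {x : ℕ → B} (hx : IsBasicSeq 𝕜 x)
    (F : ℕ → Finset ℕ)
    (H : ∀ c : ℕ → 𝕜, (∃ M : ℝ, ∀ n, ‖∑ j ∈ range n, c j • x j‖ ≤ M) →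
      Bornology.IsBounded (Set.range fun m => ∑ j ∈ F m, c j)) :
    ∃ K : ℝ, 0 ≤ K ∧ ∀ (c : ℕ → 𝕜) (m n : ℕ), F m ⊆ range n →
      ‖∑ j ∈ F m, c j‖ ≤ K * ‖∑ i ∈ range n, c i • x i‖ := by
  obtain ⟨hx0, Λ, hΛ⟩ := hx
  let φ (m : ℕ) : StrongDual 𝕜 (boundedPartialSums 𝕜 x) := ∑ j ∈ F m, partialSumCoeff hx0 j
  have hφ (m : ℕ) (f : boundedPartialSums 𝕜 x) : φ m f = ∑ j ∈ F m, partialSumCoeff hx0 j f := by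
    simp [φ]
  obtain ⟨K, hK⟩ := banach_steinhaus (g := φ) fun f => by
    have hf (n : ℕ) : ‖∑ j ∈ range n, partialSumCoeff hx0 j f • x j‖ ≤ ‖f‖ := by
      rw [sum_partialSumCoeff_smul]
      exact norm_coe_le_norm _ n
    obtain ⟨C, hC⟩ := isBounded_iff_forall_norm_le.1 (H _ ⟨_, hf⟩)
    exact ⟨C, fun m => hφ m f ▸ hC _ ⟨m, rfl⟩⟩
  have hK0 : 0 ≤ K := (norm_nonneg _).trans (hK 0)
  refine ⟨K * max Λ 1, by positivity, fun c m n hmn => ?_⟩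
  obtain ⟨f, hf, hfc⟩ := exists_partialSumCoeff_eq hx0 hΛ c n
  calc ‖∑ j ∈ F m, c j‖ = ‖φ m f‖ := by
        rw [hφ]; exact congrArg _ (sum_congr rfl fun j hj => (hfc j (mem_range.1 (hmn hj))).symm)
    _ ≤ K * ‖f‖ := (φ m).le_of_opNorm_le (hK m) f
    _ ≤ K * (max Λ 1 * ‖∑ i ∈ range n, c i • x i‖) := by gcongr
    _ = K * max Λ 1 * ‖∑ i ∈ range n, c i • x i‖ := (mul_assoc _ _ _).symm

theorem ne_zero_of_norm_coeff_le {x : ℕ → B} {K : ℝ}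
    (hK : ∀ (d : ℕ → 𝕜) (k n : ℕ), k < n → ‖d k‖ ≤ K * ‖∑ i ∈ range n, d i • x i‖) (j : ℕ) :
    x j ≠ 0 := by
  intro hj
  have h := hK (fun i => if i = j then 1 else 0) j (j + 1) j.lt_succ_self
  norm_num [ite_smul, hj] at h

theorem ne_zero_of_norm_sum_coeff_le {x : ℕ → B} {K : ℝ}
    (hK : ∀ (c : ℕ → 𝕜) (k n : ℕ), k ≤ n → ‖∑ j ∈ range k, c j‖ ≤ K * ‖∑ i ∈ range n, c i • x i‖)
    (j : ℕ) : x j ≠ 0 := by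
  intro hj
  have h := hK (fun i => if i = j then 1 else 0) (j + 1) (j + 1) le_rfl
  norm_num [ite_smul, hj] at h

section diffSeq

variable {b : ℕ → B}

theorem sum_range_succ_diffSeq (b : ℕ → B) (n : ℕ) : ∑ j ∈ range (n + 1), diffSeq b j = b n := by
  induction n with
  | zero => simp [diffSeq]
  | succ n ih => rw [sum_range_succ, ih, diffSeq, add_sub_cancel]

theorem norm_sum_range_diffSeq_le {C : ℝ} (hC0 : 0 ≤ C) (hC : ∀ n, ‖b n‖ ≤ C) (n : ℕ) :
    ‖∑ i ∈ range n, diffSeq b i‖ ≤ C := by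
  cases n with
  | zero => simpa using hC0
  | succ n => rw [sum_range_succ_diffSeq]; exact hC n

theorem sum_smul_diffSeq (b : ℕ → B) (d : ℕ → 𝕜) (n : ℕ) :
    ∑ i ∈ range n, d i • diffSeq b i =
      ∑ i ∈ range n, (d i - d (i + 1)) • b i + d n • ∑ i ∈ range n, diffSeq b i := by
  induction n with
  | zero => simp
  | succ n ih =>
    have hS : ∑ i ∈ range n, diffSeq b i + diffSeq b n = b n := by
      rw [← sum_range_succ, sum_range_succ_diffSeq]
    rw [sum_range_succ, ih, sum_range_succ (fun i => (d i - d (i + 1)) • b i),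
      sum_range_succ_diffSeq, ← hS]
    module

theorem sum_smul_diffSeq_of_eq_zero {d : ℕ → 𝕜} {n : ℕ} (hd : d n = 0) :
    ∑ i ∈ range n, d i • diffSeq b i = ∑ i ∈ range n, (d i - d (i + 1)) • b i := by
  simp [sum_smul_diffSeq b d n, hd]

theorem sum_smul_diffSeq_of_truncation {d d' : ℕ → 𝕜} {n : ℕ} (hn : d' n = 0)
    (hd' : ∀ i < n, d' i = d i) :
    ∑ i ∈ range n, d i • diffSeq b i = ∑ i ∈ range n, (d' i - d' (i + 1)) • b i := by
  rw [← sum_smul_diffSeq_of_eq_zero hn]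
  exact sum_congr rfl fun i hi => by rw [hd' i (mem_range.1 hi)]

theorem sum_partialSum_smul_diffSeq (b : ℕ → B) (c : ℕ → 𝕜) (n : ℕ) :
    ∑ i ∈ range n, (∑ j ∈ range i, c j) • diffSeq b i =
      (∑ j ∈ range n, c j) • ∑ i ∈ range n, diffSeq b i - ∑ i ∈ range n, c i • b i := by
  simp only [sum_smul_diffSeq b, sum_range_succ, sub_add_cancel_left, neg_smul, sum_neg_distrib]
  abel

end diffSeq

section StronglySummingToCoeffConverging

variable {b : ℕ → B} {K C : ℝ}
  (hK : ∀ (c : ℕ → 𝕜) (k n : ℕ), k ≤ n → ‖∑ j ∈ range k, c j‖ ≤ K * ‖∑ i ∈ range n, c i • b i‖)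
include hK

theorem norm_coeff_le_of_norm_sum_coeff_le (d : ℕ → 𝕜) {k n : ℕ} (hkn : k < n) :
    ‖d k‖ ≤ 2 * K * ‖∑ i ∈ range n, d i • diffSeq b i‖ := by
  obtain ⟨d', hd'n, hd'⟩ : ∃ d' : ℕ → 𝕜, d' n = 0 ∧ ∀ i < n, d' i = d i :=
    ⟨Function.update d n 0, Function.update_self .., fun i hi => Function.update_of_ne hi.ne ..⟩
  set c : ℕ → 𝕜 := fun j => d' j - d' (j + 1)
  have hc (m : ℕ) : ∑ j ∈ range m, c j = d' 0 - d' m := sum_range_sub' d' m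
  rw [sum_smul_diffSeq_of_truncation hd'n hd']
  calc ‖d k‖ = ‖∑ j ∈ range n, c j - ∑ j ∈ range k, c j‖ := by
        rw [hc, hc, hd'n, hd' k hkn, sub_zero, sub_sub_cancel]
    _ ≤ ‖∑ j ∈ range n, c j‖ + ‖∑ j ∈ range k, c j‖ := norm_sub_le _ _
    _ ≤ K * ‖∑ i ∈ range n, c i • b i‖ + K * ‖∑ i ∈ range n, c i • b i‖ :=
        add_le_add (hK c n n le_rfl) (hK c k n hkn.le)
    _ = 2 * K * ‖∑ i ∈ range n, c i • b i‖ := by ring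

variable (hC : ∀ n, ‖∑ i ∈ range n, diffSeq b i‖ ≤ C)
include hC

theorem isBasicSeq_diffSeq (hK0 : 0 ≤ K) (hb : IsBasicSeq 𝕜 b) : IsBasicSeq 𝕜 (diffSeq b) := by
  obtain ⟨-, Λ, hΛ⟩ := hb
  refine ⟨ne_zero_of_norm_coeff_le fun d k n => norm_coeff_le_of_norm_sum_coeff_le hK d,
    Λ + 2 * K * C, fun d k n hkn => ?_⟩
  obtain ⟨d', hd'n, hd'⟩ : ∃ d' : ℕ → 𝕜, d' n = 0 ∧ ∀ i < n, d' i = d i :=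
    ⟨Function.update d n 0, Function.update_self .., fun i hi => Function.update_of_ne hi.ne ..⟩
  set c : ℕ → 𝕜 := fun j => d' j - d' (j + 1)
  have hE : ∑ i ∈ range n, d i • diffSeq b i = ∑ i ∈ range n, c i • b i :=
    sum_smul_diffSeq_of_truncation hd'n hd'
  have hdk : ‖d' k‖ ≤ 2 * K * ‖∑ i ∈ range n, c i • b i‖ := by
    rw [← hE]
    rcases hkn.lt_or_eq with hkn | rfl
    · rw [hd' k hkn]
      exact norm_coeff_le_of_norm_sum_coeff_le hK d hkn
    · rw [hd'n, norm_zero]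
      positivity
  have hsum : ∑ i ∈ range k, d i • diffSeq b i =
      ∑ i ∈ range k, c i • b i + d' k • ∑ i ∈ range k, diffSeq b i := by
    rw [← sum_smul_diffSeq]
    exact sum_congr rfl fun i hi => by rw [hd' i ((mem_range.1 hi).trans_le hkn)]
  rw [hE]
  calc ‖∑ i ∈ range k, d i • diffSeq b i‖
      ≤ ‖∑ i ∈ range k, c i • b i‖ + ‖d' k‖ * ‖∑ i ∈ range k, diffSeq b i‖ := by
        rw [hsum, ← norm_smul]; exact norm_add_le _ _
    _ ≤ Λ * ‖∑ i ∈ range n, c i • b i‖ + 2 * K * ‖∑ i ∈ range n, c i • b i‖ * C :=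
        add_le_add (hΛ c k n hkn) (mul_le_mul hdk (hC k) (norm_nonneg _) (by positivity))
    _ = (Λ + 2 * K * C) * ‖∑ i ∈ range n, c i • b i‖ := by ring

theorem norm_sum_sub_smul_le (hK0 : 0 ≤ K) {d : ℕ → 𝕜} {M : ℝ}
    (hM : ∀ n, ‖∑ i ∈ range n, d i • diffSeq b i‖ ≤ M) (n : ℕ) :
    ‖∑ i ∈ range n, (d i - d (i + 1)) • b i‖ ≤ M + 2 * K * M * C := by
  have hdn : ‖d n‖ ≤ 2 * K * M :=
    (norm_coeff_le_of_norm_sum_coeff_le hK d n.lt_succ_self).trans (by gcongr; exact hM _)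
  rw [eq_sub_of_add_eq (sum_smul_diffSeq b d n).symm]
  calc _ ≤ ‖∑ i ∈ range n, d i • diffSeq b i‖ + ‖d n‖ * ‖∑ i ∈ range n, diffSeq b i‖ := by
        rw [← norm_smul]; exact norm_sub_le _ _
    _ ≤ M + 2 * K * M * C :=
        add_le_add (hM n) (mul_le_mul hdn (hC n) (norm_nonneg _) ((norm_nonneg _).trans hdn))

end StronglySummingToCoeffConverging

theorem coeffConverging_diffSeq_of_stronglySumming [CompleteSpace B] {b : ℕ → B}
    (hs : StronglySumming 𝕜 b) : CoeffConverging 𝕜 (diffSeq b) := by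
  obtain ⟨hwc, hb, hsum⟩ := hs
  obtain ⟨C, hC0, hC⟩ := hwc.exists_forall_norm_le
  have hC' := norm_sum_range_diffSeq_le hC0 hC
  obtain ⟨K, hK0, hK⟩ := hb.exists_norm_sum_le range fun c hc => by
    obtain ⟨_, hl⟩ := hsum c hc
    exact Metric.isBounded_range_of_tendsto _ hl
  replace hK (c : ℕ → 𝕜) (k n : ℕ) (hkn : k ≤ n) := hK c k n (range_subset_range.2 hkn)
  refine ⟨isBasicSeq_diffSeq hK hC' hK0 hb, by simpa only [sum_range_succ_diffSeq] using hwc, ?_⟩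
  rintro d ⟨M, hM⟩
  obtain ⟨l, hl⟩ := hsum _ ⟨_, norm_sum_sub_smul_le hK hC' hK0 hM⟩
  simp only [sum_range_sub'] at hl
  exact ⟨d 0 - l, by simpa using (tendsto_const_nhds (x := d 0)).sub hl⟩

section CoeffConvergingToStronglySumming

variable {b : ℕ → B} {K C : ℝ} (hK0 : 0 ≤ K)
  (hK : ∀ (d : ℕ → 𝕜) (k n : ℕ), k < n → ‖d k‖ ≤ K * ‖∑ i ∈ range n, d i • diffSeq b i‖)
include hK0 hK

theorem norm_sum_coeff_le_of_norm_coeff_le (c : ℕ → 𝕜) {k n : ℕ} (hkn : k ≤ n) :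
    ‖∑ j ∈ range k, c j‖ ≤ 2 * K * ‖∑ i ∈ range n, c i • b i‖ := by
  set d : ℕ → 𝕜 := fun i => ∑ j ∈ range n, c j - ∑ j ∈ range i, c j
  have hcd : ∑ i ∈ range n, c i • b i = ∑ i ∈ range n, d i • diffSeq b i := by
    rw [sum_smul_diffSeq_of_eq_zero (sub_self _)]
    simp [d, sum_range_succ]
  have hd (i : ℕ) (hi : i ≤ n) : ‖d i‖ ≤ K * ‖∑ i ∈ range n, c i • b i‖ := by
    rw [hcd]
    rcases hi.lt_or_eq with hi | rfl
    · exact hK d i n hi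
    · simp only [d, sub_self, norm_zero]
      positivity
  calc ‖∑ j ∈ range k, c j‖ = ‖d 0 - d k‖ := by simp [d]
    _ ≤ ‖d 0‖ + ‖d k‖ := norm_sub_le _ _
    _ ≤ K * ‖∑ i ∈ range n, c i • b i‖ + K * ‖∑ i ∈ range n, c i • b i‖ :=
        add_le_add (hd 0 n.zero_le) (hd k hkn)
    _ = 2 * K * ‖∑ i ∈ range n, c i • b i‖ := by ring

variable (hC : ∀ n, ‖∑ i ∈ range n, diffSeq b i‖ ≤ C)
include hC

theorem norm_sum_partialSum_smul_diffSeq_le (c : ℕ → 𝕜) (n : ℕ) :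
    ‖∑ i ∈ range n, (∑ j ∈ range i, c j) • diffSeq b i‖ ≤
      (2 * K * C + 1) * ‖∑ i ∈ range n, c i • b i‖ := by
  rw [sum_partialSum_smul_diffSeq]
  calc _ ≤ ‖∑ j ∈ range n, c j‖ * ‖∑ i ∈ range n, diffSeq b i‖ + ‖∑ i ∈ range n, c i • b i‖ := by
        rw [← norm_smul]; exact norm_sub_le _ _
    _ ≤ 2 * K * ‖∑ i ∈ range n, c i • b i‖ * C + ‖∑ i ∈ range n, c i • b i‖ := by
        gcongr
        exacts [norm_sum_coeff_le_of_norm_coeff_le hK0 hK c le_rfl, hC n]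
    _ = (2 * K * C + 1) * ‖∑ i ∈ range n, c i • b i‖ := by ring

theorem isBasicSeq_of_isBasicSeq_diffSeq (he : IsBasicSeq 𝕜 (diffSeq b)) : IsBasicSeq 𝕜 b := by
  obtain ⟨-, Λ, hΛ⟩ := he
  refine ⟨ne_zero_of_norm_sum_coeff_le fun c k n => norm_sum_coeff_le_of_norm_coeff_le hK0 hK c,
    2 * K * C + max Λ 0 * (2 * K * C + 1), fun c k n hkn => ?_⟩
  calc ‖∑ i ∈ range k, c i • b i‖
      ≤ ‖∑ j ∈ range k, c j‖ * ‖∑ i ∈ range k, diffSeq b i‖ +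
          ‖∑ i ∈ range k, (∑ j ∈ range i, c j) • diffSeq b i‖ := by
        rw [← sub_sub_cancel ((∑ j ∈ range k, c j) • ∑ i ∈ range k, diffSeq b i)
          (∑ i ∈ range k, c i • b i), ← sum_partialSum_smul_diffSeq, ← norm_smul]
        exact norm_sub_le _ _
    _ ≤ 2 * K * ‖∑ i ∈ range n, c i • b i‖ * C +
          max Λ 0 * ((2 * K * C + 1) * ‖∑ i ∈ range n, c i • b i‖) :=
        add_le_add
          (mul_le_mul (norm_sum_coeff_le_of_norm_coeff_le hK0 hK c hkn) (hC k) (norm_nonneg _)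
            (by positivity))
          ((hΛ _ k n hkn).trans <| mul_le_mul (le_max_left _ _)
            (norm_sum_partialSum_smul_diffSeq_le hK0 hK hC c n) (norm_nonneg _) (le_max_right _ _))
    _ = (2 * K * C + max Λ 0 * (2 * K * C + 1)) * ‖∑ i ∈ range n, c i • b i‖ := by ring

end CoeffConvergingToStronglySumming

theorem stronglySumming_of_coeffConverging_diffSeq [CompleteSpace B] {b : ℕ → B}
    (he : CoeffConverging 𝕜 (diffSeq b)) : StronglySumming 𝕜 b := by
  obtain ⟨he, hwc, hconv⟩ := he
  simp only [sum_range_succ_diffSeq] at hwc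
  obtain ⟨C, hC0, hC⟩ := hwc.exists_forall_norm_le
  have hC' := norm_sum_range_diffSeq_le hC0 hC
  obtain ⟨K, hK0, hK⟩ := he.exists_norm_sum_le singleton fun d hd => by
    obtain ⟨_, hl⟩ := hconv d hd
    simpa using Metric.isBounded_range_of_tendsto _ hl
  replace hK (d : ℕ → 𝕜) (k n : ℕ) (hkn : k < n) :
      ‖d k‖ ≤ K * ‖∑ i ∈ range n, d i • diffSeq b i‖ := by
    simpa using hK d k n (singleton_subset_iff.2 (mem_range.2 hkn))
  refine ⟨hwc, isBasicSeq_of_isBasicSeq_diffSeq hK0 hK hC' he, fun c ⟨M, hM⟩ => ?_⟩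
  exact hconv _ ⟨(2 * K * C + 1) * M, fun n =>
    (norm_sum_partialSum_smul_diffSeq_le hK0 hK hC' c n).trans
      (mul_le_mul_of_nonneg_left (hM n) (by positivity))⟩

end

/-- (b_j) is strongly summing iff its difference sequence is coefficient converging. -/
theorem stronglySumming_iff_diffSeq_coeffConverging {𝕜 : Type*} [RCLike 𝕜] {B : Type*}
    [NormedAddCommGroup B] [NormedSpace 𝕜 B] [CompleteSpace B] (b : ℕ → B) :
    StronglySumming 𝕜 b ↔ CoeffConverging 𝕜 (diffSeq b) :=
  ⟨coeffConverging_diffSeq_of_stronglySumming, stronglySumming_of_coeffConverging_diffSeq⟩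
end

section
/- If (e_j) is a coefficient converging sequence in a Banach space, then the sequence of partial sums (Σ_{j=1}^n e_j)_{n≥1} is a non-trivial weak-Cauchy sequence, i.e., it is weak-Cauchy but not weakly convergent. -/
open Filter Topology

/-!
If the partial sums of `e` converged weakly to `b`, then by Mazur's theorem `b` would be a norm
limit of convex combinations of the partial sums beyond any index `j`, which are finite
combinations of the `e i` with `j`-th coefficient `1`. Take such an approximant `y₁` and an
approximant `y₀` supported before `j`; since the coefficient functionals of a basic sequence are
uniformly bounded, `‖e j‖ ≤ K ‖y₁ - y₀‖`, so `e j → 0`. Then some sparse set of even indices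
carries a summable subsequence of `‖e j‖`, and its indicator is a coefficient sequence with
bounded partial sums that oscillates between `1` and `0` (on the odd indices), contradicting the
coefficient converging property.
-/

open Finset

section
variable {𝕜 : Type*} [RCLike 𝕜] {B : Type*} [NormedAddCommGroup B] [NormedSpace 𝕜 B]

theorem mem_closure_of_forall_tendsto_of_eventually_mem [NormedSpace ℝ B] [IsScalarTower ℝ 𝕜 B]
    {ι : Type*} {l : Filter ι} [l.NeBot] {x : ι → B} {b : B} {s : Set B} (hs : Convex ℝ s)
    (hx : ∀ f : B →L[𝕜] 𝕜, Tendsto (fun i => f (x i)) l (𝓝 (f b)))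
    (hxs : ∀ᶠ i in l, x i ∈ s) : b ∈ closure s := by
  by_contra hb
  obtain ⟨f, u, hfu, hub⟩ :=
    RCLike.geometric_hahn_banach_closed_point (𝕜 := 𝕜) hs.closure isClosed_closure hb
  have hre : Tendsto (fun i => RCLike.re (f (x i))) l (𝓝 (RCLike.re (f b))) :=
    (RCLike.continuous_re.tendsto _).comp (hx f)
  have : RCLike.re (f b) ≤ u :=
    le_of_tendsto hre (hxs.mono fun i hi => (hfu _ (subset_closure hi)).le)
  linarith

theorem IsBasicSeq.exists_norm_coeff_mul_norm_le {e : ℕ → B} (he : IsBasicSeq 𝕜 e) :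
    ∃ K, 0 < K ∧ ∀ (c : ℕ →₀ 𝕜) (j : ℕ),
      ‖c j‖ * ‖e j‖ ≤ K * ‖Finsupp.linearCombination 𝕜 e c‖ := by
  obtain ⟨-, Λ, hΛ⟩ := he
  refine ⟨2 * max Λ 1, by positivity, fun c j => ?_⟩
  set L := (insert j c.support).sup id + 1
  have hjL : j < L := Nat.lt_succ_of_le (le_sup (f := id) (mem_insert_self j _))
  have hc : Finsupp.linearCombination 𝕜 e c = ∑ i ∈ range L, c i • e i :=
    Finsupp.linearCombination_apply_of_mem_supported 𝕜 <| (Finsupp.mem_supported 𝕜 c).2 <|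
      coe_subset.2 ((subset_insert j _).trans (subset_range_sup_succ _))
  have hproj : ∀ k ≤ L, ‖∑ i ∈ range k, c i • e i‖ ≤
      max Λ 1 * ‖Finsupp.linearCombination 𝕜 e c‖ := fun k hk => by
    rw [hc]
    exact (hΛ c k L hk).trans (mul_le_mul_of_nonneg_right (le_max_left _ _) (norm_nonneg _))
  calc ‖c j‖ * ‖e j‖ = ‖∑ i ∈ range (j + 1), c i • e i - ∑ i ∈ range j, c i • e i‖ := by
        rw [sum_range_succ_sub_sum, norm_smul]
    _ ≤ ‖∑ i ∈ range (j + 1), c i • e i‖ + ‖∑ i ∈ range j, c i • e i‖ := norm_sub_le _ _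
    _ ≤ 2 * max Λ 1 * ‖Finsupp.linearCombination 𝕜 e c‖ := by
        linarith [hproj (j + 1) hjL, hproj j hjL.le]

theorem IsBasicSeq.tendsto_zero_of_partialSums_weakly_tendsto {e : ℕ → B} (he : IsBasicSeq 𝕜 e)
    {b : B} (hb : ∀ f : B →L[𝕜] 𝕜,
      Tendsto (fun n => f (∑ j ∈ range (n + 1), e j)) atTop (𝓝 (f b))) :
    Tendsto e atTop (𝓝 0) := by
  let _ : NormedSpace ℝ B := NormedSpace.restrictScalars ℝ 𝕜 B
  have _ : IsScalarTower ℝ 𝕜 B := RestrictScalars.isScalarTower _ _ _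
  obtain ⟨K, hK, hcoeff⟩ := he.exists_norm_coeff_mul_norm_le
  set y := Finsupp.linearCombination 𝕜 e
  have hb_mem : ∀ j, b ∈ closure (y '' {c | c j = 1}) := fun j => by
    refine mem_closure_of_forall_tendsto_of_eventually_mem ?_ hb <|
      (eventually_ge_atTop j).mono fun n hn =>
        ⟨∑ i ∈ range (n + 1), Finsupp.single i (1 : 𝕜), ?_, ?_⟩
    · exact ((convex_singleton (𝕜 := ℝ) (1 : 𝕜)).linear_preimage
        ((Finsupp.lapply (R := 𝕜) (M := 𝕜) j).restrictScalars ℝ)).linear_image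
          (y.restrictScalars ℝ)
    · simp [Finsupp.finsetSum_apply, Finsupp.single_apply]
      omega
    · simp [y, map_sum]
  rw [NormedAddGroup.tendsto_nhds_zero]
  intro ε hε
  have hδ : 0 < ε / (2 * K) := by positivity
  obtain ⟨_, ⟨c₀, -, rfl⟩, h₀⟩ := Metric.mem_closure_iff.1 (hb_mem 0) _ hδ
  filter_upwards [Nat.cofinite_eq_atTop ▸ c₀.support.eventually_cofinite_notMem] with j hj
  obtain ⟨_, ⟨c₁, hc₁, rfl⟩, h₁⟩ := Metric.mem_closure_iff.1 (hb_mem j) _ hδ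
  calc ‖e j‖ = ‖(c₁ - c₀) j‖ * ‖e j‖ := by
        simp [show c₁ j = 1 from hc₁, Finsupp.notMem_support_iff.1 hj]
    _ ≤ K * dist (y c₁) (y c₀) := by
        rw [dist_eq_norm, ← map_sub]
        exact hcoeff _ _
    _ ≤ K * (dist b (y c₁) + dist b (y c₀)) := by
        gcongr
        exact dist_triangle_left _ _ _
    _ < K * (ε / (2 * K) + ε / (2 * K)) := by gcongr
    _ = ε := by field_simp; ring

theorem CoeffConverging.not_tendsto_zero {e : ℕ → B} (he : CoeffConverging 𝕜 e) :
    ¬ Tendsto e atTop (𝓝 0) := by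
  intro h0
  have heven : ∀ k, ∀ᶠ n in atTop, ‖e (2 * n)‖ < (1 / 2 : ℝ) ^ k := fun k =>
    (tendsto_norm_zero.comp (h0.comp (tendsto_id.const_mul_atTop' two_pos))).eventually
      (gt_mem_nhds (by positivity))
  obtain ⟨φ, hφ, hφe⟩ := extraction_forall_of_eventually heven
  set ψ : ℕ → ℕ := fun k => 2 * φ k
  have hψ : StrictMono ψ := fun a b hab => by simp only [ψ]; linarith [hφ hab]
  set c : ℕ → 𝕜 := (Set.range ψ).indicator 1
  have hcψ : ∀ k, c (ψ k) = 1 := fun k => Set.indicator_of_mem (Set.mem_range_self k) _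
  have hc_odd : ∀ k, c (2 * k + 1) = 0 := fun k =>
    Set.indicator_of_notMem (by rintro ⟨m, hm : 2 * φ m = 2 * k + 1⟩; omega) _
  have hsum : Summable fun j => ‖c j • e j‖ := by
    refine (hψ.injective.summable_iff fun j hj => by simp [c, hj]).1 ?_
    refine summable_geometric_two.of_nonneg_of_le (fun _ => norm_nonneg _) fun k => ?_
    simpa [hcψ] using (hφe k).le
  obtain ⟨l, hl⟩ := he.2.2 c ⟨_, fun n =>
    (norm_sum_le _ _).trans (hsum.sum_le_tsum _ fun _ _ => norm_nonneg _)⟩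
  have hodd : StrictMono fun k : ℕ => 2 * k + 1 := strictMono_nat_of_lt_succ fun k => by omega
  have hl1 : l = 1 :=
    tendsto_nhds_unique (hl.comp hψ.tendsto_atTop) (by simp [Function.comp_def, hcψ])
  have hl0 : l = 0 :=
    tendsto_nhds_unique (hl.comp hodd.tendsto_atTop) (by simp [Function.comp_def, hc_odd])
  exact one_ne_zero (hl1.symm.trans hl0)

end

theorem coeffConverging_partial_sums_nontrivial_weakCauchy_general {𝕜 : Type*} [RCLike 𝕜]
    {B : Type*} [NormedAddCommGroup B] [NormedSpace 𝕜 B] (e : ℕ → B)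
    (hcc : CoeffConverging 𝕜 e) :
    WeakCauchy 𝕜 (fun n => ∑ j ∈ Finset.range (n + 1), e j) ∧
    ¬ WeaklyConvergent 𝕜 (fun n => ∑ j ∈ Finset.range (n + 1), e j) := by
  refine ⟨hcc.2.1, ?_⟩
  rintro ⟨b, hb⟩
  exact hcc.not_tendsto_zero (hcc.1.tendsto_zero_of_partialSums_weakly_tendsto hb)

/-- If (e_j) is coefficient converging, the partial sums form a non-trivial
weak-Cauchy sequence: weak-Cauchy but not weakly convergent. -/
theorem coeffConverging_partial_sums_nontrivial_weakCauchy {𝕜 : Type*} [RCLike 𝕜]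
    {B : Type*} [NormedAddCommGroup B] [NormedSpace 𝕜 B] [CompleteSpace B] (e : ℕ → B)
    (hcc : CoeffConverging 𝕜 e) :
    WeakCauchy 𝕜 (fun n => ∑ j ∈ Finset.range (n + 1), e j) ∧
    ¬ WeaklyConvergent 𝕜 (fun n => ∑ j ∈ Finset.range (n + 1), e j) :=
  coeffConverging_partial_sums_nontrivial_weakCauchy_general e hcc
end

section
/- Every non-trivial weak-Cauchy sequence in a Banach space has a subsequence which is a weak-Cauchy basic sequence dominating the summing basis (an (s)-sequence). -/
open Filter Topology

noncomputable instance sdNAG {𝕜 : Type*} [RCLike 𝕜] {B : Type*} [NormedAddCommGroup B] [NormedSpace 𝕜 B] :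
    NormedAddCommGroup (StrongDual 𝕜 B) := inferInstance
noncomputable instance sdNS {𝕜 : Type*} [RCLike 𝕜] {B : Type*} [NormedAddCommGroup B] [NormedSpace 𝕜 B] :
    NormedSpace 𝕜 (StrongDual 𝕜 B) := inferInstance
noncomputable instance sdNAG2 {𝕜 : Type*} [RCLike 𝕜] {B : Type*} [NormedAddCommGroup B] [NormedSpace 𝕜 B] :
    NormedAddCommGroup (StrongDual 𝕜 (StrongDual 𝕜 B)) := inferInstance
noncomputable instance sdNS2 {𝕜 : Type*} [RCLike 𝕜] {B : Type*} [NormedAddCommGroup B] [NormedSpace 𝕜 B] :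
    NormedSpace 𝕜 (StrongDual 𝕜 (StrongDual 𝕜 B)) := inferInstance

namespace SSeqAux
set_option maxHeartbeats 1000000

noncomputable def buildList {P : List ℕ → ℕ → Prop} (H : ∀ l, ∃ m, P l m) : ℕ → List ℕ
  | 0 => []
  | k + 1 => buildList H k ++ [Classical.choose (H (buildList H k))]

noncomputable def buildSeq {P : List ℕ → ℕ → Prop} (H : ∀ l, ∃ m, P l m) (k : ℕ) : ℕ :=
  Classical.choose (H (buildList H k))

lemma buildList_eq {P : List ℕ → ℕ → Prop} (H : ∀ l, ∃ m, P l m) (k : ℕ) :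
    buildList H k = (List.range k).map (buildSeq H) := by
  induction k with
  | zero => simp [buildList]
  | succ k ih => simp [buildList, List.range_succ, ih, buildSeq]

lemma buildSeq_spec {P : List ℕ → ℕ → Prop} (H : ∀ l, ∃ m, P l m) (k : ℕ) :
    P ((List.range k).map (buildSeq H)) (buildSeq H k) := by
  rw [← buildList_eq]
  exact Classical.choose_spec (H (buildList H k))

lemma mem_le_foldr_max (l : List ℕ) {j : ℕ} (h : j ∈ l) : j ≤ l.foldr max 0 := by
  induction l with
  | nil => simp at h
  | cons a l ih =>
    rcases List.mem_cons.1 h with rfl | h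
    · exact le_max_left _ _
    · exact le_trans (ih h) (le_max_right _ _)

lemma prod_aux : ∀ (i k : ℕ),
    (∏ j ∈ Finset.Ico k (k + i), (1 + (4:ℝ)⁻¹ ^ (j+1))) ≤ 2 - (4:ℝ)⁻¹ ^ (k + i) := by
  intro i
  induction i with
  | zero =>
    intro k
    have h1 : (4:ℝ)⁻¹ ^ k ≤ 1 := pow_le_one₀ (by norm_num) (by norm_num)
    rw [Nat.add_zero, Finset.Ico_self, Finset.prod_empty]
    linarith
  | succ i ih =>
    intro k
    have hk : k ≤ k + i := Nat.le_add_right _ _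
    have h0 : k + (i+1) = (k+i) + 1 := rfl
    rw [h0, Finset.prod_Ico_succ_top hk]
    have ha : (0:ℝ) < (4:ℝ)⁻¹ ^ (k+i) := by positivity
    have hP0 : (0:ℝ) ≤ ∏ j ∈ Finset.Ico k (k + i), (1 + (4:ℝ)⁻¹ ^ (j+1)) :=
      Finset.prod_nonneg (fun j _ => by positivity)
    have hih := ih k
    have hps : (4:ℝ)⁻¹ ^ (k+i+1) = (4:ℝ)⁻¹ ^ (k+i) * 4⁻¹ := pow_succ _ _
    set a := (4:ℝ)⁻¹ ^ (k+i) with ha'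
    set P := ∏ j ∈ Finset.Ico k (k + i), (1 + (4:ℝ)⁻¹ ^ (j+1)) with hP
    rw [hps]
    have h2 : P * (1 + a * 4⁻¹) ≤ (2 - a) * (1 + a * 4⁻¹) := by
      apply mul_le_mul_of_nonneg_right hih
      positivity
    nlinarith [sq_nonneg a]




variable {𝕜 : Type*} [RCLike 𝕜] {B : Type*} [NormedAddCommGroup B] [NormedSpace 𝕜 B]

theorem step_exists (x : ℕ → B) (F : StrongDual 𝕜 (StrongDual 𝕜 B))
    (hF : ∀ f : StrongDual 𝕜 B, Tendsto (fun n => f (x n)) atTop (𝓝 (F f)))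
    {d : ℝ} (hd : 0 < d)
    (hdist : ∀ m : ℕ, d ≤ ‖NormedSpace.inclusionInDoubleDualLi 𝕜 (x m) - F‖)
    (G : Submodule 𝕜 (StrongDual 𝕜 (StrongDual 𝕜 B))) [FiniteDimensional 𝕜 G]
    {ε : ℝ} (hε : 0 < ε) (N : ℕ) :
    ∃ m, N ≤ m ∧ ∀ Φ ∈ G, ∀ t : 𝕜,
      ‖Φ‖ ≤ (1 + ε) * ‖Φ + t • (NormedSpace.inclusionInDoubleDualLi 𝕜 (x m) - F)‖ := by
  classical
  set δ : ℝ := ε / ((1 + ε) * (2 + 2 / d)) with hδdef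
  have hδ : 0 < δ := by positivity
  haveI : ProperSpace G := FiniteDimensional.proper_rclike 𝕜 G
  obtain ⟨t0, ht0sub, ht0fin, ht0cov⟩ :=
    finite_cover_balls_of_compact (isCompact_sphere (0 : G) 1) hδ
  -- norming functionals for net points
  have hnorm1 : ∀ Φ ∈ t0, ‖(Φ : StrongDual 𝕜 (StrongDual 𝕜 B))‖ = 1 := by
    intro Φ hΦ
    have := ht0sub hΦ
    rw [Metric.mem_sphere, dist_zero_right] at this
    exact this
  have hex : ∀ Φ ∈ t0, ∃ f : StrongDual 𝕜 B, ‖f‖ ≤ 1 ∧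
      1 - δ < ‖(Φ : StrongDual 𝕜 (StrongDual 𝕜 B)) f‖ := by
    intro Φ hΦ
    have h1 : 1 - δ < ‖(Φ : StrongDual 𝕜 (StrongDual 𝕜 B))‖ := by
      rw [hnorm1 Φ hΦ]; linarith
    obtain ⟨f, hf1, hf2⟩ :=
      ContinuousLinearMap.exists_lt_apply_of_lt_opNorm
        (Φ : StrongDual 𝕜 (StrongDual 𝕜 B)) h1
    exact ⟨f, hf1.le, hf2⟩
  choose! fc hfc1 hfc2 using hex
  -- choose m
  have hev : ∀ᶠ n in atTop, N ≤ n ∧ ∀ Φ ∈ ht0fin.toFinset,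
      ‖fc Φ (x n) - F (fc Φ)‖ < δ := by
    refine (eventually_ge_atTop N).and ((eventually_all_finset _).2 fun Φ hΦ => ?_)
    have h1 : Tendsto (fun n => fc Φ (x n) - F (fc Φ)) atTop (𝓝 0) := by
      simpa using (hF (fc Φ)).sub_const (F (fc Φ))
    exact NormedAddCommGroup.tendsto_nhds_zero.mp h1 δ hδ
  obtain ⟨m, hmN, hm⟩ := hev.exists
  refine ⟨m, hmN, ?_⟩
  set v : StrongDual 𝕜 (StrongDual 𝕜 B) :=
    NormedSpace.inclusionInDoubleDualLi 𝕜 (x m) - F with hvdef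
  have hvn : d ≤ ‖v‖ := hdist m
  -- unit-norm case
  have key : ∀ Φ : StrongDual 𝕜 (StrongDual 𝕜 B), Φ ∈ G → ‖Φ‖ = 1 →
      ∀ t : 𝕜, 1 ≤ (1 + ε) * ‖Φ + t • v‖ := by
    intro Φ hΦ hΦn t
    rcases le_or_gt (2 / d) ‖t‖ with h | h
    · have h1 : ‖t • v‖ ≤ ‖Φ + t • v‖ + ‖Φ‖ := by
        have := norm_sub_le (Φ + t • v) Φ
        simpa using this
      have h2 : (2:ℝ) ≤ ‖t • v‖ := by
        rw [norm_smul]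
        calc (2:ℝ) = (2 / d) * d := by field_simp
        _ ≤ ‖t‖ * ‖v‖ := by
            exact mul_le_mul h hvn hd.le (norm_nonneg t)
      have h3 : 1 ≤ ‖Φ + t • v‖ := by rw [hΦn] at h1; linarith
      nlinarith [norm_nonneg (Φ + t • v)]
    · -- find net point
      have hmem : (⟨Φ, hΦ⟩ : G) ∈ Metric.sphere (0 : G) 1 := by
        rw [Metric.mem_sphere, dist_zero_right]
        exact hΦn
      obtain ⟨Φ₀, hΦ₀t, hΦ₀ball⟩ := Set.mem_iUnion₂.1 (ht0cov hmem)
      have hdistΦ : ‖Φ - (Φ₀ : StrongDual 𝕜 (StrongDual 𝕜 B))‖ < δ := by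
        have := Metric.mem_ball.1 hΦ₀ball
        rw [Subtype.dist_eq, dist_eq_norm] at this
        exact this
      set f := fc Φ₀ with hfdef
      have hf1 : ‖f‖ ≤ 1 := hfc1 Φ₀ hΦ₀t
      have hf2 : 1 - δ < ‖(Φ₀ : StrongDual 𝕜 (StrongDual 𝕜 B)) f‖ := hfc2 Φ₀ hΦ₀t
      have hf3 : ‖f (x m) - F f‖ < δ := hm Φ₀ (ht0fin.mem_toFinset.2 hΦ₀t)
      have hvf : v f = f (x m) - F f := by
        simp [hvdef, ContinuousLinearMap.sub_apply]
        rfl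
      have happ : ‖Φ + t • v‖ ≥ ‖(Φ + t • v) f‖ :=
        ContinuousLinearMap.unit_le_opNorm _ _ hf1
      have hsplit : (Φ + t • v) f =
          (Φ₀ : StrongDual 𝕜 (StrongDual 𝕜 B)) f
            + ((Φ - Φ₀) f + t * (v f)) := by
        simp [ContinuousLinearMap.add_apply, ContinuousLinearMap.sub_apply,
          ContinuousLinearMap.smul_apply, smul_eq_mul]
        ring
      have hlow : 1 - δ - (δ + (2/d) * δ) ≤ ‖(Φ + t • v) f‖ := by
        rw [hsplit]
        have h4 : ‖((Φ - Φ₀ : StrongDual 𝕜 (StrongDual 𝕜 B))) f + t * (v f)‖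
            ≤ δ + (2/d) * δ := by
          refine (norm_add_le _ _).trans (add_le_add ?_ ?_)
          · calc ‖(Φ - (Φ₀:StrongDual 𝕜 (StrongDual 𝕜 B))) f‖
                ≤ ‖(Φ - (Φ₀:StrongDual 𝕜 (StrongDual 𝕜 B)))‖ * ‖f‖ :=
                  ContinuousLinearMap.le_opNorm _ _
              _ ≤ δ * 1 := by
                  apply mul_le_mul hdistΦ.le hf1 (norm_nonneg _) hδ.le
              _ = δ := mul_one δ
          · rw [norm_mul, hvf]
            apply mul_le_mul h.le hf3.le (norm_nonneg _) (by positivity)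
        calc 1 - δ - (δ + (2/d)*δ)
            ≤ ‖(Φ₀ : StrongDual 𝕜 (StrongDual 𝕜 B)) f‖ - (δ + (2/d)*δ) := by
              linarith
          _ ≤ ‖(Φ₀ : StrongDual 𝕜 (StrongDual 𝕜 B)) f
                + ((Φ - Φ₀) f + t * (v f))‖ := by
              have := norm_add_le ((Φ₀ : StrongDual 𝕜 (StrongDual 𝕜 B)) f
                + ((Φ - Φ₀) f + t * (v f))) (-(((Φ - Φ₀) f + t * (v f))))
              simp only [add_neg_cancel_right, norm_neg] at this
              linarith [h4]
      have hδsum : 1 - δ - (δ + (2/d) * δ) = 1 - ε / (1 + ε) := by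
        rw [hδdef]
        field_simp
        ring
      have hfin : 1 / (1 + ε) ≤ ‖Φ + t • v‖ := by
        have : 1 - ε / (1+ε) = 1/(1+ε) := by field_simp; ring
        rw [hδsum, this] at hlow
        linarith [happ]
      calc (1:ℝ) = (1 + ε) * (1 / (1 + ε)) := by field_simp
        _ ≤ (1 + ε) * ‖Φ + t • v‖ := by
            apply mul_le_mul_of_nonneg_left hfin (by positivity)
  -- general case by scaling
  intro Φ hΦ t
  rcases eq_or_ne Φ 0 with rfl | hΦ0
  · simp only [norm_zero]
    positivity
  · have hn : (0:ℝ) < ‖Φ‖ := (norm_pos_iff (E := StrongDual 𝕜 (StrongDual 𝕜 B))).2 hΦ0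
    set u : 𝕜 := (‖Φ‖ : 𝕜)⁻¹ with hudef
    have hun : ‖u‖ = ‖Φ‖⁻¹ := by
      rw [hudef, norm_inv, RCLike.norm_ofReal, abs_of_pos hn]
    have h1 : ‖u • Φ‖ = 1 := by
      rw [norm_smul, hun]
      field_simp
    have h2 := key (u • Φ) (G.smul_mem u hΦ) h1 (u * t)
    have h3 : u • Φ + (u * t) • v = u • (Φ + t • v) := by
      rw [smul_add, mul_smul]
    rw [h3, norm_smul, hun] at h2
    calc ‖Φ‖ = ‖Φ‖ * 1 := (mul_one _).symm
      _ ≤ ‖Φ‖ * ((1 + ε) * (‖Φ‖⁻¹ * ‖Φ + t • v‖)) := by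
          apply mul_le_mul_of_nonneg_left h2 hn.le
      _ = (1 + ε) * ‖Φ + t • v‖ := by
          field_simp


end SSeqAux

set_option maxHeartbeats 1600000
/-- Every non-trivial weak-Cauchy sequence has a subsequence which is a weak-Cauchy
basic sequence dominating the summing basis (an (s)-sequence). -/

theorem exists_s_subsequence {𝕜 : Type*} [RCLike 𝕜] {B : Type*} [NormedAddCommGroup B]
    [NormedSpace 𝕜 B] [CompleteSpace B] (x : ℕ → B)
    (hwc : WeakCauchy 𝕜 x) (hnt : ¬ WeaklyConvergent 𝕜 x) :
    ∃ φ : ℕ → ℕ, StrictMono φ ∧ WeakCauchy 𝕜 (x ∘ φ) ∧ IsBasicSeq 𝕜 (x ∘ φ) ∧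
      ∃ C : ℝ, ∀ (n : ℕ) (c : ℕ → 𝕜), ∀ k ≤ n,
        ‖∑ i ∈ Finset.range k, c i‖ ≤ C * ‖∑ i ∈ Finset.range n, c i • x (φ i)‖ := by
  classical
  -- uniform bound on the sequence
  obtain ⟨C₀, hC₀⟩ : ∃ C₀ : ℝ, ∀ n, ‖((NormedSpace.inclusionInDoubleDualLi 𝕜 (E := B)) (x n) : StrongDual 𝕜 (StrongDual 𝕜 B))‖ ≤ C₀ := by
    apply banach_steinhaus (g := fun n => ((NormedSpace.inclusionInDoubleDualLi 𝕜 (E := B)) (x n) : StrongDual 𝕜 B →L[𝕜] 𝕜))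
    intro f
    obtain ⟨l, hl⟩ := hwc f
    obtain ⟨C, hC⟩ := hl.norm.bddAbove_range
    exact ⟨C, fun n => hC (Set.mem_range_self n)⟩
  -- the weak* limit functional F in the bidual
  choose lim hlim using hwc
  have hadd : ∀ f g : StrongDual 𝕜 B, lim (f + g) = lim f + lim g := by
    intro f g
    refine tendsto_nhds_unique (hlim (f + g)) ?_
    simpa using (hlim f).add (hlim g)
  have hsmul : ∀ (a : 𝕜) (f : StrongDual 𝕜 B), lim (a • f) = a * lim f := by
    intro a f
    refine tendsto_nhds_unique (hlim (a • f)) ?_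
    simpa [smul_eq_mul] using (hlim f).const_mul a
  set Flin : StrongDual 𝕜 B →ₗ[𝕜] 𝕜 :=
    { toFun := lim, map_add' := hadd,
      map_smul' := fun a f => by simpa [smul_eq_mul] using hsmul a f } with hFlin
  have hFbound : ∀ f, ‖Flin f‖ ≤ (max C₀ 0) * ‖f‖ := by
    intro f
    have h1 : Tendsto (fun n => ‖f (x n)‖) atTop (𝓝 ‖lim f‖) := (hlim f).norm
    apply le_of_tendsto h1
    filter_upwards with n
    calc ‖f (x n)‖ = ‖((NormedSpace.inclusionInDoubleDualLi 𝕜 (E := B)) (x n) : StrongDual 𝕜 (StrongDual 𝕜 B)) f‖ := rfl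
      _ ≤ ‖((NormedSpace.inclusionInDoubleDualLi 𝕜 (E := B)) (x n) : StrongDual 𝕜 (StrongDual 𝕜 B))‖ * ‖f‖ :=
          ContinuousLinearMap.le_opNorm _ _
      _ ≤ max C₀ 0 * ‖f‖ :=
          mul_le_mul_of_nonneg_right ((hC₀ n).trans (le_max_left _ _)) (norm_nonneg f)
  set F : StrongDual 𝕜 (StrongDual 𝕜 B) :=
    Flin.mkContinuous (max C₀ 0) hFbound with hFdef
  have hF : ∀ f : StrongDual 𝕜 B, Tendsto (fun n => f (x n)) atTop (𝓝 (F f)) := by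
    intro f
    exact hlim f
  -- F is not in the canonical image of B
  have hnotmem : F ∉ Set.range (fun b : B => (NormedSpace.inclusionInDoubleDualLi 𝕜 (E := B)) b) := by
    rintro ⟨b, hb⟩
    refine hnt ⟨b, fun f => ?_⟩
    have h1 := hF f
    have h2 : F f = f b := by rw [← hb]; rfl
    rwa [h2] at h1
  have hclosed : IsClosed (Set.range (fun b : B => (NormedSpace.inclusionInDoubleDualLi 𝕜 (E := B)) b)) := by
    have h1 : Isometry (fun b : B => (NormedSpace.inclusionInDoubleDualLi 𝕜 (E := B)) b) :=
      (NormedSpace.inclusionInDoubleDualLi 𝕜 (E := B)).isometry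
    exact h1.isClosedEmbedding.isClosed_range
  have hd : 0 < Metric.infDist F (Set.range (fun b : B => (NormedSpace.inclusionInDoubleDualLi 𝕜 (E := B)) b)) :=
    (hclosed.notMem_iff_infDist_pos ⟨(NormedSpace.inclusionInDoubleDualLi 𝕜 (E := B)) 0, Set.mem_range_self 0⟩).1 hnotmem
  set d : ℝ := Metric.infDist F (Set.range (fun b : B => (NormedSpace.inclusionInDoubleDualLi 𝕜 (E := B)) b)) with hddef
  have hdist : ∀ m : ℕ, d ≤ ‖(NormedSpace.inclusionInDoubleDualLi 𝕜 (E := B)) (x m) - F‖ := by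
    intro m
    calc d ≤ dist F ((NormedSpace.inclusionInDoubleDualLi 𝕜 (E := B)) (x m)) := Metric.infDist_le_dist_of_mem (Set.mem_range_self _)
      _ = ‖(NormedSpace.inclusionInDoubleDualLi 𝕜 (E := B)) (x m) - F‖ := by rw [dist_eq_norm, norm_sub_rev]
  have hdF : d ≤ ‖F‖ := by
    calc d ≤ dist F ((NormedSpace.inclusionInDoubleDualLi 𝕜 (E := B)) 0) := Metric.infDist_le_dist_of_mem (Set.mem_range_self _)
      _ = ‖F‖ := by rw [map_zero, dist_zero_right]
  have hFpos : (0:ℝ) < ‖F‖ := lt_of_lt_of_le hd hdF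
  have hkey : ∀ (b : B) (s : 𝕜), ‖s‖ * d ≤ ‖(NormedSpace.inclusionInDoubleDualLi 𝕜 (E := B)) b + s • F‖ := by
    intro b s
    rcases eq_or_ne s 0 with rfl | hs
    · simp
    · have h1 : (NormedSpace.inclusionInDoubleDualLi 𝕜 (E := B)) b + s • F = s • (F + s⁻¹ • (NormedSpace.inclusionInDoubleDualLi 𝕜 (E := B)) b) := by
        rw [smul_add, smul_smul, mul_inv_cancel₀ hs, one_smul, add_comm]
      rw [h1, norm_smul]
      refine mul_le_mul_of_nonneg_left ?_ (norm_nonneg s)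
      have h2 : F + s⁻¹ • (NormedSpace.inclusionInDoubleDualLi 𝕜 (E := B)) b = F - (NormedSpace.inclusionInDoubleDualLi 𝕜 (E := B)) (-(s⁻¹ • b)) := by
        rw [map_neg, map_smul, sub_neg_eq_add]
      calc d ≤ dist F ((NormedSpace.inclusionInDoubleDualLi 𝕜 (E := B)) (-(s⁻¹ • b))) := Metric.infDist_le_dist_of_mem (Set.mem_range_self _)
        _ = ‖F - (NormedSpace.inclusionInDoubleDualLi 𝕜 (E := B)) (-(s⁻¹ • b))‖ := dist_eq_norm _ _
        _ = ‖F + s⁻¹ • (NormedSpace.inclusionInDoubleDualLi 𝕜 (E := B)) b‖ := by rw [← h2]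
  -- a functional not vanishing on F; eventually nonzero terms
  have hFne : F ≠ 0 := by
    intro h0
    exact hnotmem ⟨0, by simp [h0]⟩
  obtain ⟨f₀, hf₀⟩ : ∃ f₀ : StrongDual 𝕜 B, F f₀ ≠ 0 := by
    by_contra h
    push_neg at h
    exact hFne (ContinuousLinearMap.ext fun f => by simp [h f])
  obtain ⟨N₀, hN₀⟩ : ∃ N₀, ∀ n, N₀ ≤ n → x n ≠ 0 := by
    obtain ⟨N₀, hN₀⟩ := eventually_atTop.1 ((hF f₀).eventually_ne hf₀)
    exact ⟨N₀, fun n hn hx0 => hN₀ n hn (by simp [hx0])⟩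
  -- the inductive selection
  set P : List ℕ → ℕ → Prop := fun l m =>
    (∀ j ∈ l, j < m) ∧ x m ≠ 0 ∧
    ∀ Φ ∈ Submodule.span 𝕜 (insert F ((fun i => (NormedSpace.inclusionInDoubleDualLi 𝕜 (E := B)) (x i)) '' {i | i ∈ l})),
      ∀ t : 𝕜, ‖Φ‖ ≤ (1 + (4:ℝ)⁻¹ ^ (l.length + 1)) * ‖Φ + t • ((NormedSpace.inclusionInDoubleDualLi 𝕜 (E := B)) (x m) - F)‖
    with hPdef
  have H : ∀ l, ∃ m, P l m := by
    intro l
    have hfin : (insert F ((fun i => (NormedSpace.inclusionInDoubleDualLi 𝕜 (E := B)) (x i)) '' {i | i ∈ l})).Finite :=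
      (l.finite_toSet.image _).insert F
    haveI := FiniteDimensional.span_of_finite 𝕜 hfin
    have hε4 : (0:ℝ) < (4:ℝ)⁻¹ ^ (l.length + 1) := by positivity
    obtain ⟨m, hm1, hm2⟩ := SSeqAux.step_exists x F hF hd hdist
      (Submodule.span 𝕜 (insert F ((fun i => (NormedSpace.inclusionInDoubleDualLi 𝕜 (E := B)) (x i)) '' {i | i ∈ l}))) hε4
      (max N₀ (l.foldr max 0 + 1))
    have hm1a : N₀ ≤ m := le_trans (le_max_left _ _) hm1
    have hm1b : l.foldr max 0 + 1 ≤ m := le_trans (le_max_right _ _) hm1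
    refine ⟨m, fun j hj => ?_, hN₀ m hm1a, hm2⟩
    have := SSeqAux.mem_le_foldr_max l hj
    omega
  set φ : ℕ → ℕ := SSeqAux.buildSeq H with hφdef
  have hspec : ∀ k, P ((List.range k).map φ) (φ k) := fun k => SSeqAux.buildSeq_spec H k
  have hmono : StrictMono φ := by
    refine strictMono_nat_of_lt_succ fun k => ?_
    exact (hspec (k + 1)).1 (φ k)
      (List.mem_map_of_mem (f := φ) (List.mem_range.2 (Nat.lt_succ_self k)))
  -- the telescoping estimates
  set T : (ℕ → 𝕜) → ℕ → ℕ → StrongDual 𝕜 (StrongDual 𝕜 B) := fun c k n =>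
    (∑ i ∈ Finset.range k, c i • (NormedSpace.inclusionInDoubleDualLi 𝕜 (E := B)) (x (φ i))) + (∑ j ∈ Finset.Ico k n, c j) • F with hT
  have hstep : ∀ (c : ℕ → 𝕜) (k n : ℕ), k < n →
      ‖T c k n‖ ≤ (1 + (4:ℝ)⁻¹ ^ (k + 1)) * ‖T c (k + 1) n‖ := by
    intro c k n hkn
    have hs := (hspec k).2.2
    have hlen : ((List.range k).map φ).length = k := by simp
    have hmem : T c k n ∈ Submodule.span 𝕜
        (insert F ((fun i => (NormedSpace.inclusionInDoubleDualLi 𝕜 (E := B)) (x i)) '' {i | i ∈ (List.range k).map φ})) := by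
      refine Submodule.add_mem _ (Submodule.sum_mem _ fun i hi => ?_)
        (Submodule.smul_mem _ _ (Submodule.subset_span (Set.mem_insert _ _)))
      refine Submodule.smul_mem _ _ (Submodule.subset_span (Set.mem_insert_of_mem _ ?_))
      exact ⟨φ i, List.mem_map_of_mem (f := φ) (List.mem_range.2 (Finset.mem_range.1 hi)), rfl⟩
    have h2 := hs (T c k n) hmem (c k)
    rw [hlen] at h2
    have h3 : T c k n + c k • ((NormedSpace.inclusionInDoubleDualLi 𝕜 (E := B)) (x (φ k)) - F) = T c (k + 1) n := by
      simp only [hT]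
      rw [smul_sub, Finset.sum_range_succ, Finset.sum_eq_sum_Ico_succ_bot hkn, add_smul]
      abel
    rwa [h3] at h2
  have hchain : ∀ (c : ℕ → 𝕜) (i k : ℕ),
      ‖T c k (k + i)‖ ≤ (∏ j ∈ Finset.Ico k (k + i), (1 + (4:ℝ)⁻¹ ^ (j + 1)))
        * ‖T c (k + i) (k + i)‖ := by
    intro c i
    induction i with
    | zero => intro k; simp
    | succ i ih =>
      intro k
      have h1 : k < k + (i + 1) := by omega
      have h2 := hstep c k (k + (i + 1)) h1
      have h3 := ih (k + 1)
      have he : k + 1 + i = k + (i + 1) := by omega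
      rw [he] at h3
      calc ‖T c k (k + (i + 1))‖
          ≤ (1 + (4:ℝ)⁻¹ ^ (k + 1)) * ‖T c (k + 1) (k + (i + 1))‖ := h2
        _ ≤ (1 + (4:ℝ)⁻¹ ^ (k + 1)) *
            ((∏ j ∈ Finset.Ico (k + 1) (k + (i + 1)), (1 + (4:ℝ)⁻¹ ^ (j + 1)))
              * ‖T c (k + (i + 1)) (k + (i + 1))‖) :=
            mul_le_mul_of_nonneg_left h3 (by positivity)
        _ = (∏ j ∈ Finset.Ico k (k + (i + 1)), (1 + (4:ℝ)⁻¹ ^ (j + 1)))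
              * ‖T c (k + (i + 1)) (k + (i + 1))‖ := by
            rw [Finset.prod_eq_prod_Ico_succ_bot h1]
            ring
  have hchain2 : ∀ (c : ℕ → 𝕜) (k n : ℕ), k ≤ n → ‖T c k n‖ ≤ 2 * ‖T c n n‖ := by
    intro c k n hkn
    have h1 := hchain c (n - k) k
    have he : k + (n - k) = n := by omega
    rw [he] at h1
    have h2 : (∏ j ∈ Finset.Ico k n, (1 + (4:ℝ)⁻¹ ^ (j + 1))) ≤ 2 := by
      have h3 := SSeqAux.prod_aux (n - k) k
      rw [he] at h3
      have h4 : (0:ℝ) < (4:ℝ)⁻¹ ^ n := by positivity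
      linarith
    exact h1.trans (mul_le_mul_of_nonneg_right h2 (norm_nonneg _))
  have hJsum : ∀ (c : ℕ → 𝕜) (k : ℕ),
      (NormedSpace.inclusionInDoubleDualLi 𝕜 (E := B)) (∑ i ∈ Finset.range k, c i • x (φ i))
        = ∑ i ∈ Finset.range k, c i • (NormedSpace.inclusionInDoubleDualLi 𝕜 (E := B)) (x (φ i)) := by
    intro c k
    rw [map_sum]
    exact Finset.sum_congr rfl fun i _ => by rw [map_smul]
  have hTnn : ∀ (c : ℕ → 𝕜) (n : ℕ), ‖T c n n‖ = ‖∑ i ∈ Finset.range n, c i • x (φ i)‖ := by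
    intro c n
    have h1 : T c n n = (NormedSpace.inclusionInDoubleDualLi 𝕜 (E := B)) (∑ i ∈ Finset.range n, c i • x (φ i)) := by
      simp only [hT]
      rw [Finset.Ico_self, Finset.sum_empty, zero_smul, add_zero, hJsum]
    rw [h1, (NormedSpace.inclusionInDoubleDualLi 𝕜 (E := B)).norm_map]
  set Lam : ℝ := 2 * (1 + ‖F‖ / d) with hLam
  have hLamd : Lam * d = 2 * (d + ‖F‖) := by
    rw [hLam]
    field_simp
  have hclaimA : ∀ (c : ℕ → 𝕜) (k n : ℕ), k ≤ n →
      ‖∑ i ∈ Finset.range k, c i • x (φ i)‖ ≤ Lam * ‖∑ i ∈ Finset.range n, c i • x (φ i)‖ := by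
    intro c k n hkn
    set s : 𝕜 := ∑ j ∈ Finset.Ico k n, c j with hs
    have e1 : (NormedSpace.inclusionInDoubleDualLi 𝕜 (E := B)) (∑ i ∈ Finset.range k, c i • x (φ i)) + s • F = T c k n := by
      simp only [hT]
      rw [hJsum]
    have h2 : ‖s‖ * d ≤ ‖T c k n‖ := by rw [← e1]; exact hkey _ s
    have h3 : ‖T c k n‖ ≤ 2 * ‖T c n n‖ := hchain2 c k n hkn
    have h4 : ‖∑ i ∈ Finset.range k, c i • x (φ i)‖ ≤ ‖T c k n‖ + ‖s‖ * ‖F‖ := by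
      calc ‖∑ i ∈ Finset.range k, c i • x (φ i)‖
          = ‖(NormedSpace.inclusionInDoubleDualLi 𝕜 (E := B)) (∑ i ∈ Finset.range k, c i • x (φ i))‖ := ((NormedSpace.inclusionInDoubleDualLi 𝕜 (E := B)).norm_map _).symm
        _ = ‖T c k n - s • F‖ := by rw [← e1, add_sub_cancel_right]
        _ ≤ ‖T c k n‖ + ‖s • F‖ := norm_sub_le _ _
        _ = ‖T c k n‖ + ‖s‖ * ‖F‖ := by rw [norm_smul]
    rw [← hTnn c n]
    have hF0 : (0:ℝ) ≤ ‖F‖ := norm_nonneg F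
    refine le_of_mul_le_mul_right ?_ hd
    calc ‖∑ i ∈ Finset.range k, c i • x (φ i)‖ * d
        ≤ (‖T c k n‖ + ‖s‖ * ‖F‖) * d := mul_le_mul_of_nonneg_right h4 hd.le
      _ = ‖T c k n‖ * d + ‖s‖ * d * ‖F‖ := by ring
      _ ≤ ‖T c k n‖ * d + ‖T c k n‖ * ‖F‖ := by nlinarith
      _ = ‖T c k n‖ * (d + ‖F‖) := by ring
      _ ≤ (2 * ‖T c n n‖) * (d + ‖F‖) :=
          mul_le_mul_of_nonneg_right h3 (add_nonneg hd.le hF0)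
      _ = Lam * ‖T c n n‖ * d := by rw [mul_comm (Lam * ‖T c n n‖) d, ← mul_assoc, mul_comm d Lam, hLamd]; ring
  have hclaimB : ∀ (n : ℕ) (c : ℕ → 𝕜), ∀ k ≤ n,
      ‖∑ i ∈ Finset.range k, c i‖
        ≤ (2 * Lam / ‖F‖) * ‖∑ i ∈ Finset.range n, c i • x (φ i)‖ := by
    intro n c k hk
    have e1 : T c 0 k = (∑ i ∈ Finset.range k, c i) • F := by
      simp only [hT]
      rw [Finset.range_zero, Finset.sum_empty, zero_add, ← Finset.range_eq_Ico]
    have h1 : ‖T c 0 k‖ ≤ 2 * ‖T c k k‖ := hchain2 c 0 k (Nat.zero_le k)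
    have h2 : ‖∑ i ∈ Finset.range k, c i‖ * ‖F‖
        ≤ 2 * ‖∑ i ∈ Finset.range k, c i • x (φ i)‖ := by
      calc ‖∑ i ∈ Finset.range k, c i‖ * ‖F‖ = ‖(∑ i ∈ Finset.range k, c i) • F‖ :=
            (norm_smul _ _).symm
        _ = ‖T c 0 k‖ := by rw [e1]
        _ ≤ 2 * ‖T c k k‖ := h1
        _ = 2 * ‖∑ i ∈ Finset.range k, c i • x (φ i)‖ := by rw [hTnn]
    have h3 := hclaimA c k n hk
    refine le_of_mul_le_mul_right ?_ hFpos
    calc ‖∑ i ∈ Finset.range k, c i‖ * ‖F‖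
        ≤ 2 * ‖∑ i ∈ Finset.range k, c i • x (φ i)‖ := h2
      _ ≤ 2 * (Lam * ‖∑ i ∈ Finset.range n, c i • x (φ i)‖) :=
          mul_le_mul_of_nonneg_left h3 (by norm_num)
      _ = 2 * Lam / ‖F‖ * ‖∑ i ∈ Finset.range n, c i • x (φ i)‖ * ‖F‖ := by
          field_simp
  refine ⟨φ, hmono, ?_, ⟨fun j => (hspec j).2.1, Lam, fun c k n hkn => ?_⟩,
    ⟨2 * Lam / ‖F‖, fun n c k hk => hclaimB n c k hk⟩⟩
  · intro f
    exact ⟨F f, (hF f).comp hmono.tendsto_atTop⟩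
  · simpa [Function.comp] using hclaimA c k n hkn
end
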